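/- arXiv:2104.03479 — 5 statements merged into one kernel-verified Lean document; each statement's English description precedes it below -/
import Mathlib

section
/- Suppose (X,X') is an exchangeable pair, D = F(X,X') with F antisymmetric, E[D | X] = λ(W + R) for λ > 0, W = φ(X), and Δ = W - W' where W' = φ(X'). Then for any absolutely continuous function f with bounded derivative, E[W f(W)] = (1/(2λ)) E[ D ∫_{-Δ}^0 f'(W+u) du ] - E[R f(W)]. -/
open MeasureTheory ProbabilityTheory intervalIntegral

/-- For an exchangeable pair `(X,X')`, `D = F(X,X')` antisymmetric with
`E[D | X] = λ(W + R)`, `W = φ(X)`, `Δ = W - W'`, and any absolutely continuous `f` with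
bounded derivative `f'`:
`E[W f(W)] = (1/(2λ)) E[ D ∫_{-Δ}^0 f'(W+u) du ] - E[R f(W)]`. -/
theorem stmt1
    {Ω 𝒳 : Type*} [MeasurableSpace Ω] [MeasurableSpace 𝒳]
    (μ : Measure Ω) [IsProbabilityMeasure μ]
    (X X' : Ω → 𝒳) (hX : Measurable X) (hX' : Measurable X')
    (hexch : Measure.map (fun ω => (X ω, X' ω)) μ
      = Measure.map (fun ω => (X' ω, X ω)) μ)
    (φ : 𝒳 → ℝ) (hφ : Measurable φ)
    (F : 𝒳 → 𝒳 → ℝ) (hF : Measurable (Function.uncurry F))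
    (hanti : ∀ x x', F x x' = - F x' x)
    (W W' D Δ R : Ω → ℝ)
    (hW : W = fun ω => φ (X ω)) (hW' : W' = fun ω => φ (X' ω))
    (hD : D = fun ω => F (X ω) (X' ω)) (hΔ : Δ = fun ω => W ω - W' ω)
    (hW0 : ∫ ω, W ω ∂μ = 0) (hW2 : ∫ ω, (W ω) ^ 2 ∂μ = 1)
    (l : ℝ) (hl : 0 < l)
    (hlin : μ[D | MeasurableSpace.comap X inferInstance]
      =ᵐ[μ] fun ω => l * (W ω + R ω))
    (f f' : ℝ → ℝ) (hderiv : ∀ x, HasDerivAt f (f' x) x)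
    (hf'm : Measurable f') (Cf : ℝ) (hf'bdd : ∀ x, |f' x| ≤ Cf)
    (hDint : Integrable D μ)
    (hint1 : Integrable (fun ω => W ω * f (W ω)) μ)
    (hint2 : Integrable (fun ω => D ω * (∫ u in (-Δ ω)..0, f' (W ω + u))) μ)
    (hint3 : Integrable (fun ω => R ω * f (W ω)) μ)
    (hint4 : Integrable (fun ω => D ω * f (W ω)) μ)
    (hint5 : Integrable (fun ω => D ω * f (W' ω)) μ) :
    ∫ ω, W ω * f (W ω) ∂μ
      = (1 / (2 * l)) * ∫ ω, D ω * (∫ u in (-Δ ω)..0, f' (W ω + u)) ∂μ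
        - ∫ ω, R ω * f (W ω) ∂μ := by
  have hfc : Continuous f := by
    rw [continuous_iff_continuousAt]; exact fun x => (hderiv x).continuousAt
  -- interval integrability of f'
  have hII : ∀ a b : ℝ, IntervalIntegrable f' MeasureTheory.volume a b := by
    intro a b
    refine (_root_.intervalIntegrable_const (c := Cf)).mono_fun
      hf'm.aestronglyMeasurable ?_
    exact Filter.Eventually.of_forall fun x => by
      simpa [Real.norm_eq_abs] using (hf'bdd x).trans (le_abs_self Cf)
  -- pointwise: the inner integral equals f(W) - f(W')
  have hpt : ∀ ω, (∫ u in (-Δ ω)..0, f' (W ω + u)) = f (W ω) - f (W' ω) := by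
    intro ω
    have h1 : (∫ u in (-Δ ω)..0, f' (W ω + u))
        = ∫ v in (W ω + -Δ ω)..(W ω + 0), f' v :=
      intervalIntegral.integral_comp_add_left f' (W ω)
    rw [h1]
    have h2 : W ω + -Δ ω = W' ω := by rw [hΔ]; ring
    have h3 : W ω + (0 : ℝ) = W ω := add_zero _
    rw [h2, h3]
    exact intervalIntegral.integral_eq_sub_of_hasDerivAt
      (fun x _ => hderiv x) (hII _ _)
  -- exchangeability: E[D (f(W) + f(W'))] = 0
  have hg : Measurable (fun p : 𝒳 × 𝒳 => F p.1 p.2 * (f (φ p.1) + f (φ p.2))) := by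
    exact hF.mul ((hfc.measurable.comp (hφ.comp measurable_fst)).add
      (hfc.measurable.comp (hφ.comp measurable_snd)))
  have hexch0 : ∫ ω, D ω * (f (W ω) + f (W' ω)) ∂μ = 0 := by
    set g : 𝒳 × 𝒳 → ℝ := fun p => F p.1 p.2 * (f (φ p.1) + f (φ p.2)) with hgdef
    have key : ∫ ω, g (X ω, X' ω) ∂μ = ∫ ω, g (X' ω, X ω) ∂μ := by
      rw [← integral_map (hX.prodMk hX').aemeasurable
          (hg.aestronglyMeasurable),
        ← integral_map (hX'.prodMk hX).aemeasurable
          (hg.aestronglyMeasurable), hexch]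
    have hneg : ∀ ω, g (X' ω, X ω) = - g (X ω, X' ω) := by
      intro ω
      simp only [hgdef]
      rw [hanti (X' ω) (X ω)]
      ring
    have : ∫ ω, D ω * (f (W ω) + f (W' ω)) ∂μ
        = - ∫ ω, D ω * (f (W ω) + f (W' ω)) ∂μ := by
      have e1 : ∀ ω, D ω * (f (W ω) + f (W' ω)) = g (X ω, X' ω) := by
        intro ω; simp [hgdef, hD, hW, hW']
      calc ∫ ω, D ω * (f (W ω) + f (W' ω)) ∂μ
          = ∫ ω, g (X ω, X' ω) ∂μ := by simp_rw [e1]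
        _ = ∫ ω, g (X' ω, X ω) ∂μ := key
        _ = ∫ ω, - g (X ω, X' ω) ∂μ := by simp_rw [hneg]
        _ = - ∫ ω, g (X ω, X' ω) ∂μ := MeasureTheory.integral_neg _
        _ = - ∫ ω, D ω * (f (W ω) + f (W' ω)) ∂μ := by simp_rw [e1]
    linarith
  have hint45 : Integrable (fun ω => D ω * (f (W ω) + f (W' ω))) μ :=
    (hint4.add hint5).congr (Filter.Eventually.of_forall fun ω => by
      simp [mul_add])
  -- conditioning: E[D f(W)] = l (E[W f(W)] + E[R f(W)])
  have hm : MeasurableSpace.comap X inferInstance ≤ ‹MeasurableSpace Ω› :=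
    hX.comap_le
  haveI : SigmaFinite (μ.trim hm) := by
    have : IsFiniteMeasure (μ.trim hm) := isFiniteMeasure_trim hm
    exact this.toSigmaFinite
  have hfWm : StronglyMeasurable[MeasurableSpace.comap X inferInstance]
      (fun ω => f (W ω)) := by
    have : Measurable[MeasurableSpace.comap X inferInstance]
        (fun ω => f (W ω)) := by
      rw [hW]
      exact (hfc.measurable.comp hφ).comp (comap_measurable X)
    exact this.stronglyMeasurable
  have hcond : ∫ ω, D ω * f (W ω) ∂μ
      = ∫ ω, l * (W ω + R ω) * f (W ω) ∂μ := by
    have hpull : μ[(fun ω => f (W ω)) * D | MeasurableSpace.comap X inferInstance]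
        =ᵐ[μ] (fun ω => f (W ω)) * μ[D | MeasurableSpace.comap X inferInstance] :=
      condExp_mul_of_stronglyMeasurable_left hfWm
        (by convert hint4 using 1; funext ω; simp [Pi.mul_apply, mul_comm]) hDint
    calc ∫ ω, D ω * f (W ω) ∂μ
        = ∫ ω, ((fun ω => f (W ω)) * D) ω ∂μ := by
          apply MeasureTheory.integral_congr_ae
          exact Filter.Eventually.of_forall fun ω => by simp [mul_comm]
      _ = ∫ ω, (μ[(fun ω => f (W ω)) * D | MeasurableSpace.comap X inferInstance]) ω ∂μ :=
          (integral_condExp hm).symm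
      _ = ∫ ω, ((fun ω => f (W ω)) * μ[D | MeasurableSpace.comap X inferInstance]) ω ∂μ :=
          MeasureTheory.integral_congr_ae hpull
      _ = ∫ ω, l * (W ω + R ω) * f (W ω) ∂μ := by
          apply MeasureTheory.integral_congr_ae
          filter_upwards [hlin] with ω hω
          simp only [Pi.mul_apply]
          rw [hω]; ring
  have hsplit : ∫ ω, l * (W ω + R ω) * f (W ω) ∂μ
      = l * (∫ ω, W ω * f (W ω) ∂μ + ∫ ω, R ω * f (W ω) ∂μ) := by
    rw [← integral_add hint1 hint3, ← MeasureTheory.integral_const_mul]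
    exact MeasureTheory.integral_congr_ae
      (Filter.Eventually.of_forall fun ω => by ring)
  -- the main integral equals E[D(f(W)-f(W'))] = 2 E[D f(W)]
  have hmain : ∫ ω, D ω * (∫ u in (-Δ ω)..0, f' (W ω + u)) ∂μ
      = 2 * ∫ ω, D ω * f (W ω) ∂μ := by
    have e : ∀ ω, D ω * (∫ u in (-Δ ω)..0, f' (W ω + u))
        = 2 * (D ω * f (W ω)) - D ω * (f (W ω) + f (W' ω)) := by
      intro ω; rw [hpt ω]; ring
    calc ∫ ω, D ω * (∫ u in (-Δ ω)..0, f' (W ω + u)) ∂μ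
        = ∫ ω, (2 * (D ω * f (W ω)) - D ω * (f (W ω) + f (W' ω))) ∂μ := by
          simp_rw [e]
      _ = 2 * ∫ ω, D ω * f (W ω) ∂μ := by
          rw [integral_sub (hint4.const_mul 2) hint45, hexch0, sub_zero,
            MeasureTheory.integral_const_mul]
  have hDfW : ∫ ω, D ω * f (W ω) ∂μ
      = l * (∫ ω, W ω * f (W ω) ∂μ + ∫ ω, R ω * f (W ω) ∂μ) := by
    rw [hcond, hsplit]
  rw [hmain, hDfW]
  have hl0 : l ≠ 0 := ne_of_gt hl
  field_simp
  ring
end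

section
/- Let (X,X') be an exchangeable pair, W = φ(X), W' = φ(X'), Δ = W - W', D = F(X,X') antisymmetric, and D* = F*(X,X') symmetric with D* ≥ |D|. Then for any nondecreasing function f, |E[ D ∫_{-Δ}^0 (f(W+u) - f(W)) du ]| ≤ E[ D* Δ f(W) ]. -/
open MeasureTheory ProbabilityTheory intervalIntegral

private lemma key_le (f : ℝ → ℝ) (hf : Monotone f) {a b : ℝ} (hab : a ≤ b) :
    |(∫ v in a..b, f v) - (b - a) / 2 * (f b + f a)| ≤ (b - a) / 2 * (f b - f a) := by
  have hint : IntervalIntegrable f MeasureTheory.volume a b := hf.intervalIntegrable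
  have h1 : (b - a) * f a ≤ ∫ v in a..b, f v := by
    have := intervalIntegral.integral_mono_on hab intervalIntegrable_const hint
      (fun x hx => hf hx.1)
    simpa [smul_eq_mul] using this
  have h2 : (∫ v in a..b, f v) ≤ (b - a) * f b := by
    have := intervalIntegral.integral_mono_on hab hint intervalIntegrable_const
      (fun x hx => hf hx.2)
    simpa [smul_eq_mul] using this
  rw [abs_le]
  constructor <;> linarith

private lemma key_bound (f : ℝ → ℝ) (hf : Monotone f) (a b : ℝ) :
    |(∫ v in a..b, f v) - (b - a) / 2 * (f b + f a)| ≤ (b - a) / 2 * (f b - f a) := by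
  rcases le_total a b with hab | hab
  · exact key_le f hf hab
  · have h := key_le f hf hab
    rw [intervalIntegral.integral_symm a b] at h
    have e1 : -(∫ v in a..b, f v) - (a - b) / 2 * (f a + f b)
        = -((∫ v in a..b, f v) - (b - a) / 2 * (f b + f a)) := by ring
    rw [e1, abs_neg] at h
    have e2 : (a - b) / 2 * (f a - f b) = (b - a) / 2 * (f b - f a) := by ring
    linarith

/-- **Lemma 4.1.** With `(X,X')` exchangeable, `W = φ(X)`, `W' = φ(X')`,
`Δ = W - W'`, `D = F(X,X')` antisymmetric, `D* = F*(X,X')` symmetric with `D* ≥ |D|`,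
for any nondecreasing `f`:
`|E[ D ∫_{-Δ}^0 (f(W+u) - f(W)) du ]| ≤ E[ D* Δ f(W) ]`. -/
theorem stmt2
    {Ω 𝒳 : Type*} [MeasurableSpace Ω] [MeasurableSpace 𝒳]
    (μ : Measure Ω) [IsProbabilityMeasure μ]
    (X X' : Ω → 𝒳) (hX : Measurable X) (hX' : Measurable X')
    (hexch : Measure.map (fun ω => (X ω, X' ω)) μ
      = Measure.map (fun ω => (X' ω, X ω)) μ)
    (φ : 𝒳 → ℝ) (hφ : Measurable φ)
    (F Fstar : 𝒳 → 𝒳 → ℝ)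
    (hF : Measurable (Function.uncurry F))
    (hFstar : Measurable (Function.uncurry Fstar))
    (hanti : ∀ x x', F x x' = - F x' x)
    (hsymm : ∀ x x', Fstar x x' = Fstar x' x)
    (W W' D Dstar Δ : Ω → ℝ)
    (hW : W = fun ω => φ (X ω)) (hW' : W' = fun ω => φ (X' ω))
    (hD : D = fun ω => F (X ω) (X' ω))
    (hDstar : Dstar = fun ω => Fstar (X ω) (X' ω))
    (hΔ : Δ = fun ω => W ω - W' ω)
    (hge : ∀ᵐ ω ∂μ, |D ω| ≤ Dstar ω)
    (f : ℝ → ℝ) (hf : Monotone f)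
    (hint1 : Integrable (fun ω => D ω * (∫ u in (-Δ ω)..0, (f (W ω + u) - f (W ω)))) μ)
    (hint2 : Integrable (fun ω => Dstar ω * Δ ω * f (W ω)) μ)
    (hint3 : Integrable (fun ω => Dstar ω * Δ ω * f (W' ω)) μ) :
    |∫ ω, D ω * (∫ u in (-Δ ω)..0, (f (W ω + u) - f (W ω))) ∂μ|
      ≤ ∫ ω, Dstar ω * Δ ω * f (W ω) ∂μ := by
  subst hW hW' hΔ hD hDstar
  -- the primitive of f
  set P : ℝ → ℝ := fun t => ∫ v in (0:ℝ)..t, f v with hPdef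
  have hPc : Continuous P :=
    intervalIntegral.continuous_primitive (fun a b => hf.intervalIntegrable) 0
  have hfm : Measurable f := hf.measurable
  -- rewrite of the inner integral
  have hrew : ∀ w w' : ℝ,
      (∫ u in (-(w - w'))..0, (f (w + u) - f w)) = P w - P w' - (w - w') * f w := by
    intro w w'
    have hmono : Monotone fun u => f (w + u) := fun u v h => hf (by linarith)
    have h1 : IntervalIntegrable (fun u => f (w + u)) MeasureTheory.volume (-(w - w')) 0 :=
      hmono.intervalIntegrable
    rw [intervalIntegral.integral_sub h1 intervalIntegrable_const]
    have e1 : (∫ u in (-(w - w'))..0, f (w + u)) = ∫ v in w'..w, f v := by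
      rw [intervalIntegral.integral_comp_add_left f w]
      congr 1 <;> ring
    have e2 : (∫ v in w'..w, f v) = P w - P w' :=
      (intervalIntegral.integral_interval_sub_left hf.intervalIntegrable
        hf.intervalIntegrable).symm
    rw [e1, e2, intervalIntegral.integral_const, smul_eq_mul]
    ring
  -- the two key product functions on 𝒳 × 𝒳
  set g1 : 𝒳 × 𝒳 → ℝ := fun p =>
    F p.1 p.2 * (P (φ p.1) - P (φ p.2) - (φ p.1 - φ p.2) * f (φ p.1)) with hg1def
  set g2 : 𝒳 × 𝒳 → ℝ := fun p =>
    Fstar p.1 p.2 * (φ p.1 - φ p.2) * f (φ p.2) with hg2def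
  have hg1 : Measurable g1 := by
    apply hF.mul
    exact ((hPc.measurable.comp (hφ.comp measurable_fst)).sub
      (hPc.measurable.comp (hφ.comp measurable_snd))).sub
      (((hφ.comp measurable_fst).sub (hφ.comp measurable_snd)).mul
        (hfm.comp (hφ.comp measurable_fst)))
  have hg2 : Measurable g2 := by
    apply Measurable.mul
    · exact hFstar.mul ((hφ.comp measurable_fst).sub (hφ.comp measurable_snd))
    · exact hfm.comp (hφ.comp measurable_snd)
  have hpair : AEMeasurable (fun ω => (X ω, X' ω)) μ := (hX.prodMk hX').aemeasurable
  have hpair' : AEMeasurable (fun ω => (X' ω, X ω)) μ := (hX'.prodMk hX).aemeasurable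
  -- exchangeability transfer for integrals
  have swap : ∀ g : 𝒳 × 𝒳 → ℝ, Measurable g →
      ∫ ω, g (X ω, X' ω) ∂μ = ∫ ω, g (X' ω, X ω) ∂μ := by
    intro g hg
    rw [← integral_map hpair hg.aestronglyMeasurable, hexch,
      integral_map hpair' hg.aestronglyMeasurable]
  -- exchangeability transfer for integrability
  have swapInt : ∀ g : 𝒳 × 𝒳 → ℝ, Measurable g →
      Integrable (fun ω => g (X ω, X' ω)) μ → Integrable (fun ω => g (X' ω, X ω)) μ := by
    intro g hg h
    have h1 : Integrable g (Measure.map (fun ω => (X ω, X' ω)) μ) :=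
      (integrable_map_measure hg.aestronglyMeasurable hpair).mpr h
    rw [hexch] at h1
    exact (integrable_map_measure hg.aestronglyMeasurable hpair').mp h1
  -- pointwise identification of the main integrand
  have hpt : ∀ ω, F (X ω) (X' ω)
      * (∫ u in (-(φ (X ω) - φ (X' ω)))..0, (f (φ (X ω) + u) - f (φ (X ω))))
      = g1 (X ω, X' ω) := by
    intro ω
    rw [hrew]
  -- rewrite goal and hint1 in terms of g1
  rw [show (∫ ω, F (X ω) (X' ω)
      * (∫ u in (-(φ (X ω) - φ (X' ω)))..0, (f (φ (X ω) + u) - f (φ (X ω)))) ∂μ)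
      = ∫ ω, g1 (X ω, X' ω) ∂μ from integral_congr_ae (Filter.Eventually.of_forall hpt)]
  have I1 : Integrable (fun ω => g1 (X ω, X' ω)) μ :=
    hint1.congr (Filter.Eventually.of_forall hpt)
  have I2 : Integrable (fun ω => g1 (X' ω, X ω)) μ := swapInt g1 hg1 I1
  -- abbreviations
  set A : ℝ := ∫ ω, g1 (X ω, X' ω) ∂μ with hAdef
  set B : ℝ := ∫ ω, Fstar (X ω) (X' ω) * (φ (X ω) - φ (X' ω)) * f (φ (X ω)) ∂μ with hBdef
  -- the swapped f(W') integral equals -B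
  have hB' : ∫ ω, Fstar (X ω) (X' ω) * (φ (X ω) - φ (X' ω)) * f (φ (X' ω)) ∂μ = -B := by
    have h := swap g2 hg2
    simp only [hg2def] at h
    rw [h]
    rw [hBdef, ← MeasureTheory.integral_neg]
    apply MeasureTheory.integral_congr_ae
    filter_upwards with ω
    rw [hsymm (X' ω) (X ω)]
    ring
  -- the swapped A integral equals A
  have hA' : ∫ ω, g1 (X' ω, X ω) ∂μ = A := (swap g1 hg1).symm
  -- sum function and its dominator
  have hsum : ∫ ω, (g1 (X ω, X' ω) + g1 (X' ω, X ω)) ∂μ = 2 * A := by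
    rw [integral_add I1 I2, hA', ← hAdef]; ring
  have hdom : ∫ ω, (Fstar (X ω) (X' ω) * (φ (X ω) - φ (X' ω)) * f (φ (X ω))
      - Fstar (X ω) (X' ω) * (φ (X ω) - φ (X' ω)) * f (φ (X' ω))) ∂μ = 2 * B := by
    rw [integral_sub hint2 hint3, hB', ← hBdef]; ring
  -- pointwise bound on the sum
  have hae : ∀ᵐ ω ∂μ, |g1 (X ω, X' ω) + g1 (X' ω, X ω)|
      ≤ Fstar (X ω) (X' ω) * (φ (X ω) - φ (X' ω)) * f (φ (X ω))
      - Fstar (X ω) (X' ω) * (φ (X ω) - φ (X' ω)) * f (φ (X' ω)) := by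
    filter_upwards [hge] with ω hgeω
    set w : ℝ := φ (X ω)
    set w' : ℝ := φ (X' ω)
    have hS : g1 (X ω, X' ω) + g1 (X' ω, X ω)
        = F (X ω) (X' ω) * (2 * (P w - P w') - (w - w') * (f w + f w')) := by
      simp only [hg1def]
      rw [hanti (X' ω) (X ω)]
      ring
    have hkb := key_bound f hf w' w
    have e2 : (∫ v in w'..w, f v) = P w - P w' :=
      (intervalIntegral.integral_interval_sub_left hf.intervalIntegrable
        hf.intervalIntegrable).symm
    rw [e2] at hkb
    rw [hS, abs_mul]
    have hFs : (0:ℝ) ≤ Fstar (X ω) (X' ω) := le_trans (abs_nonneg _) hgeω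
    calc |F (X ω) (X' ω)| * |2 * (P w - P w') - (w - w') * (f w + f w')|
        ≤ Fstar (X ω) (X' ω) * ((w - w') * (f w - f w')) := by
          apply mul_le_mul hgeω _ (abs_nonneg _) hFs
          have : |2 * (P w - P w') - (w - w') * (f w + f w')|
              = 2 * |(P w - P w') - (w - w') / 2 * (f w + f w')| := by
            rw [show 2 * (P w - P w') - (w - w') * (f w + f w')
              = 2 * ((P w - P w') - (w - w') / 2 * (f w + f w')) by ring, abs_mul]
            norm_num
          rw [this]
          linarith
      _ = Fstar (X ω) (X' ω) * (w - w') * f w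
          - Fstar (X ω) (X' ω) * (w - w') * f w' := by ring
  -- conclude
  have hfinal : |2 * A| ≤ 2 * B := by
    rw [← hsum, ← hdom]
    calc |∫ ω, (g1 (X ω, X' ω) + g1 (X' ω, X ω)) ∂μ|
        ≤ ∫ ω, |g1 (X ω, X' ω) + g1 (X' ω, X ω)| ∂μ := by
          simpa [Real.norm_eq_abs] using
            norm_integral_le_integral_norm (fun ω => g1 (X ω, X' ω) + g1 (X' ω, X ω)) (μ := μ)
      _ ≤ _ := integral_mono_ae (I1.add I2).abs (hint2.sub hint3) hae
  rw [abs_mul, abs_two] at hfinal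
  linarith
end

section
/- Let f_z be the bounded solution of the Stein equation f'(w) - w f(w) = 1{w ≤ z} - Φ(z), given explicitly by f_z(w) = √(2π) e^{w²/2} Φ(w)(1-Φ(z)) for w ≤ z and f_z(w) = √(2π) e^{w²/2} Φ(z)(1-Φ(w)) for w > z. Then ‖f_z‖_∞ ≤ 1, ‖f_z'‖_∞ ≤ 1, and sup_w |w f_z(w)| ≤ 1. -/
open MeasureTheory ProbabilityTheory Real
open Set Filter Topology

/-- The standard normal distribution function. -/
noncomputable def stdNormalCDF (z : ℝ) : ℝ :=
  (ProbabilityTheory.gaussianReal 0 1 (Set.Iic z)).toReal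

/-- The bounded solution of the Stein equation `f'(w) - w f(w) = 1{w ≤ z} - Φ(z)`. -/
noncomputable def steinSolution (z w : ℝ) : ℝ :=
  if w ≤ z then
    Real.sqrt (2 * Real.pi) * Real.exp (w ^ 2 / 2) * stdNormalCDF w * (1 - stdNormalCDF z)
  else
    Real.sqrt (2 * Real.pi) * Real.exp (w ^ 2 / 2) * stdNormalCDF z * (1 - stdNormalCDF w)

noncomputable def nphi (x : ℝ) : ℝ := (Real.sqrt (2 * Real.pi))⁻¹ * Real.exp (-x^2/2)

lemma nphi_eq : gaussianPDFReal 0 1 = nphi := by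
  funext x
  simp [gaussianPDFReal, nphi]

lemma nphi_pos (x : ℝ) : 0 < nphi x := by
  have := Real.sqrt_pos.2 (by positivity : (0:ℝ) < 2 * Real.pi)
  exact mul_pos (inv_pos.2 this) (Real.exp_pos _)

lemma integrable_nphi : Integrable nphi := nphi_eq ▸ integrable_gaussianPDFReal 0 1

lemma continuous_nphi : Continuous nphi := by
  unfold nphi; fun_prop

lemma integral_nphi : ∫ x, nphi x = 1 := nphi_eq ▸ integral_gaussianPDFReal_eq_one 0 one_ne_zero

lemma cdf_eq (z : ℝ) : stdNormalCDF z = ∫ x in Iic z, nphi x := by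
  rw [stdNormalCDF, gaussianReal_apply_eq_integral 0 one_ne_zero,
    ENNReal.toReal_ofReal (integral_nonneg (fun x => (nphi_eq ▸ nphi_pos x).le)), nphi_eq]

lemma integrable_mul_nphi : Integrable (fun t => t * nphi t) := by
  have h := integrable_rpow_mul_exp_neg_mul_sq (b := 1/2) (by norm_num) (s := 1) (by norm_num)
  simp only [Real.rpow_one] at h
  have : (fun t => t * nphi t) = fun t => (Real.sqrt (2*Real.pi))⁻¹ * (t * Real.exp (-(1/2) * t^2)) := by
    funext t; unfold nphi; rw [show -(1/2 : ℝ)*t^2 = -t^2/2 by ring]; ring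
  rw [this]
  exact h.const_mul _

lemma cdf_nonneg (z : ℝ) : 0 ≤ stdNormalCDF z := ENNReal.toReal_nonneg

lemma cdf_le_one (z : ℝ) : stdNormalCDF z ≤ 1 := by
  rw [cdf_eq]
  calc ∫ x in Iic z, nphi x ≤ ∫ x, nphi x :=
        setIntegral_le_integral integrable_nphi (Filter.Eventually.of_forall fun x => (nphi_pos x).le)
    _ = 1 := integral_nphi

lemma cdf_sub (a b : ℝ) : stdNormalCDF b - stdNormalCDF a = ∫ x in a..b, nphi x := by
  rw [cdf_eq, cdf_eq]
  exact intervalIntegral.integral_Iic_sub_Iic integrable_nphi.integrableOn integrable_nphi.integrableOn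

lemma cdf_mono {a b : ℝ} (h : a ≤ b) : stdNormalCDF a ≤ stdNormalCDF b := by
  have := cdf_sub a b
  have h2 : 0 ≤ ∫ x in a..b, nphi x :=
    intervalIntegral.integral_nonneg h (fun x _ => (nphi_pos x).le)
  linarith

lemma cdf_neg (z : ℝ) : stdNormalCDF (-z) = 1 - stdNormalCDF z := by
  have h1 : stdNormalCDF (-z) = ∫ x in Ioi z, nphi x := by
    rw [cdf_eq]
    have : ∀ x, nphi x = nphi (-x) := by intro x; unfold nphi; rw [neg_sq]
    calc ∫ x in Iic (-z), nphi x = ∫ x in Iic (-z), nphi (-x) := by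
          exact setIntegral_congr_fun measurableSet_Iic (fun x _ => this x)
      _ = ∫ x in Ioi (-(-z)), nphi x := integral_comp_neg_Iic (-z) nphi
      _ = ∫ x in Ioi z, nphi x := by rw [neg_neg]
  have h2 : stdNormalCDF z + ∫ x in Ioi z, nphi x = 1 := by
    rw [cdf_eq, ← integral_nphi]
    exact intervalIntegral.integral_Iic_add_Ioi integrable_nphi.integrableOn integrable_nphi.integrableOn
  linarith

lemma cdf_hasDerivAt (w : ℝ) : HasDerivAt stdNormalCDF (nphi w) w := by
  have key : ∀ x : ℝ, stdNormalCDF x = stdNormalCDF 0 + ∫ t in (0:ℝ)..x, nphi t := by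
    intro x
    have := cdf_sub 0 x
    linarith
  have h : HasDerivAt (fun u => ∫ t in (0:ℝ)..u, nphi t) (nphi w) w := by
    apply intervalIntegral.integral_hasDerivAt_right
      (integrable_nphi.intervalIntegrable)
      (continuous_nphi.stronglyMeasurableAtFilter _ _)
      continuous_nphi.continuousAt
  have h2 := h.const_add (stdNormalCDF 0)
  exact h2.congr_of_eventuallyEq (Filter.Eventually.of_forall fun x => (key x))

lemma nphi_hasDerivAt (t : ℝ) : HasDerivAt nphi (-t * nphi t) t := by
  have h1 : HasDerivAt (fun t : ℝ => -t^2/2) (-t) t := by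
    have := ((hasDerivAt_pow 2 t).neg).div_const 2
    refine this.congr_deriv ?_
    simp; ring
  have h2 := (h1.exp).const_mul (Real.sqrt (2*Real.pi))⁻¹
  refine h2.congr_deriv ?_
  unfold nphi; ring

lemma nphi_tendsto_atTop : Tendsto nphi atTop (𝓝 0) := by
  have h1 : Tendsto (fun t : ℝ => -t^2/2) atTop atBot := by
    have hsq : Tendsto (fun t : ℝ => t^2) atTop atTop := tendsto_pow_atTop (by norm_num)
    have hneg : Tendsto (fun t : ℝ => -t^2) atTop atBot := tendsto_neg_atTop_atBot.comp hsq
    exact hneg.atBot_div_const (by norm_num)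
  have h2 : Tendsto nphi atTop (𝓝 ((Real.sqrt (2*Real.pi))⁻¹ * 0)) := by
    apply Tendsto.const_mul
    exact Real.tendsto_exp_atBot.comp h1
  simpa using h2

lemma nphi_neg (x : ℝ) : nphi (-x) = nphi x := by unfold nphi; rw [neg_sq]

lemma nphi_tendsto_atBot : Tendsto nphi atBot (𝓝 0) := by
  have h := nphi_tendsto_atTop.comp tendsto_neg_atBot_atTop
  have h2 : (nphi ∘ fun t : ℝ => -t) = nphi := by
    funext x; exact nphi_neg x
  rwa [h2] at h

lemma integral_neg_mul_nphi_Iic (w : ℝ) : ∫ t in Iic w, -t * nphi t = nphi w := by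
  have h := integral_Iic_of_hasDerivAt_of_tendsto' (a := w)
    (f := nphi) (f' := fun t => -t * nphi t)
    (fun x _ => nphi_hasDerivAt x)
    (((integrable_mul_nphi.neg).congr
      (Filter.Eventually.of_forall fun t => (neg_mul t (nphi t)).symm ▸ rfl)).integrableOn)
    nphi_tendsto_atBot
  rw [h, sub_zero]

lemma mills {w : ℝ} (hw : w < 0) : (-w) * stdNormalCDF w ≤ nphi w := by
  have key : stdNormalCDF w ≤ ∫ t in Iic w, (t / w) * nphi t := by
    rw [cdf_eq]
    apply setIntegral_mono_on integrable_nphi.integrableOn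
    · exact ((integrable_mul_nphi.div_const w).congr
        (Filter.Eventually.of_forall fun t => by ring)).integrableOn
    · exact measurableSet_Iic
    · intro t ht
      have htw : t ≤ w := ht
      have h1 : 1 ≤ t / w := by
        rw [le_div_iff_of_neg hw]
        simpa using htw
      nlinarith [nphi_pos t]
  have h2 : ∫ t in Iic w, (t / w) * nphi t = nphi w / (-w) := by
    have heq : ∀ t : ℝ, (t / w) * nphi t = (-w)⁻¹ * (-t * nphi t) := by
      intro t; field_simp
    simp_rw [heq]
    rw [integral_const_mul, integral_neg_mul_nphi_Iic]
    field_simp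
  rw [h2] at key
  have hpos : (0:ℝ) < -w := by linarith
  rw [← le_div_iff₀' hpos]
  exact key

lemma csqrt_bounds : 2.5066 ≤ Real.sqrt (2*Real.pi) ∧ Real.sqrt (2*Real.pi) ≤ 2.5067 := by
  have hc : Real.sqrt (2*Real.pi) ^ 2 = 2*Real.pi :=
    Real.sq_sqrt (by positivity)
  have hcpos : 0 < Real.sqrt (2*Real.pi) := Real.sqrt_pos.2 (by positivity)
  constructor <;> nlinarith [Real.pi_gt_d6, Real.pi_lt_d6]

lemma core_small (t P Q npw np0 E c : ℝ)
    (hc : c^2 = 2*Real.pi) (hcpos : 0 < c)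
    (hE1 : 1 ≤ E) (hE2 : E*(2 - t^2) ≤ 2)
    (ht0 : 0 ≤ t) (ht : t ≤ 0.84)
    (hnpw : c*E*npw = 1) (hnp0 : c*np0 = 1)
    (hP0 : 0 ≤ P) (hQ0 : 0 ≤ Q)
    (hP : P ≤ 1/2 - t*npw) (hQ : Q ≤ 1/2 + t*np0) :
    c*E*(P*Q) ≤ 1 := by
  have hπ1 : 3.141592 < Real.pi := Real.pi_gt_d6
  have hπ2 : Real.pi < 3.141593 := Real.pi_lt_d6
  have hEpos : 0 < E := by linarith
  have hnpwpos : 0 < npw := by nlinarith [mul_pos hcpos hEpos]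
  have hnp0pos : 0 < np0 := by nlinarith [hcpos]
  -- P*Q ≤ (1/2 - t*npw)*(1/2 + t*np0)
  have hkey : P*Q ≤ (1/2 - t*npw)*(1/2 + t*np0) := by
    have hA : 0 ≤ 1/2 - t*npw := le_trans hP0 hP
    have hB : 0 ≤ 1/2 + t*np0 := by positivity
    exact mul_le_mul hP hQ hQ0 hA
  have step : c*E*(P*Q) ≤ c*E*((1/2 - t*npw)*(1/2 + t*np0)) := by
    apply mul_le_mul_of_nonneg_left hkey (by positivity)
  refine le_trans step ?_
  -- c*E*(1/2 - t*npw)*(1/2 + t*np0) = (c*E/2 - t)*(1/2 + t/c)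
  have hnpw' : npw = 1/(c*E) := by field_simp at hnpw ⊢; linarith [hnpw]
  have hnp0' : np0 = 1/c := by field_simp at hnp0 ⊢; linarith [hnp0]
  rw [hnpw', hnp0']
  have expand : c*E*((1/2 - t*(1/(c*E)))*(1/2 + t*(1/c))) = (c*E - 2*t)*(c + 2*t)/(4*c) := by
    field_simp
    ring
  rw [expand, div_le_one (by positivity)]
  nlinarith [sq_nonneg (t - 0.84), sq_nonneg t, mul_nonneg ht0 (sub_nonneg.2 ht),
    mul_pos hcpos hEpos, sq_nonneg (c*E - 2*t), mul_nonneg (mul_nonneg ht0 ht0) ht0,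
    mul_le_mul_of_nonneg_left hE2 hcpos.le]

lemma core_big (t P Q npw np0 E c : ℝ)
    (hcge : 2.5066 ≤ c)
    (hEpos : 0 < E)
    (ht : 0.84 ≤ t)
    (hnpw : c*E*npw = 1) (hnp0 : c*np0 = 1)
    (hP0 : 0 ≤ P) (hQ0 : 0 ≤ Q)
    (hP : t*P ≤ npw) (hQ : Q ≤ 1/2 + t*np0) :
    c*E*(P*Q) ≤ 1 := by
  have hcpos : 0 < c := by linarith
  have htpos : 0 < t := by linarith
  have hnpwpos : 0 < npw := by nlinarith [mul_pos hcpos hEpos]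
  have hnp0pos : 0 < np0 := by nlinarith [hcpos]
  have hkey : (t*P)*Q ≤ npw*(1/2 + t*np0) :=
    mul_le_mul hP hQ hQ0 hnpwpos.le
  have step : c*E*(P*Q) ≤ (c*E/t) * (npw*(1/2 + t*np0)) := by
    have h4 := mul_le_mul_of_nonneg_left hkey (le_of_lt (by positivity : (0:ℝ) < c*E/t))
    calc c*E*(P*Q) = (c*E/t) * ((t*P)*Q) := by field_simp
      _ ≤ _ := h4
  refine le_trans step ?_
  have hnp0' : np0 = 1/c := by field_simp at hnp0 ⊢; linarith [hnp0]
  have expand : (c*E/t) * (npw*(1/2 + t*(1/c))) = (c*E*npw)*(1/(2*t)) + (c*E*npw)*(1/c) := by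
    field_simp
  rw [hnp0', expand, hnpw]
  have h1 : 1/(2*t) ≤ 1/(1.68:ℝ) := by
    apply one_div_le_one_div_of_le (by norm_num) (by linarith)
  have h2 : 1/c ≤ 1/(2.5066:ℝ) := by
    apply one_div_le_one_div_of_le (by norm_num) hcge
  have : (1:ℝ)/1.68 + 1/2.5066 ≤ 1 := by norm_num
  linarith

lemma cdf_zero : stdNormalCDF 0 = 1/2 := by
  have h := cdf_neg 0
  rw [neg_zero] at h
  linarith

lemma nphi_zero : nphi 0 = (Real.sqrt (2*Real.pi))⁻¹ := by
  unfold nphi; norm_num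

lemma nphi_le_nphi_zero (t : ℝ) : nphi t ≤ nphi 0 := by
  unfold nphi
  apply mul_le_mul_of_nonneg_left _ (by positivity)
  apply Real.exp_le_exp.2
  nlinarith [sq_nonneg t]

lemma nphi_mono {a b : ℝ} (hab : a ≤ b) (hb : b ≤ 0) : nphi a ≤ nphi b := by
  unfold nphi
  apply mul_le_mul_of_nonneg_left _ (by positivity)
  apply Real.exp_le_exp.2
  nlinarith

lemma gap_lower {w : ℝ} (hw : w ≤ 0) : (-w) * nphi w ≤ 1/2 - stdNormalCDF w := by
  have hs := cdf_sub w 0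
  rw [cdf_zero] at hs
  have hmono : ∫ t in w..(0:ℝ), nphi w ≤ ∫ t in w..(0:ℝ), nphi t := by
    apply intervalIntegral.integral_mono_on hw
      intervalIntegrable_const integrable_nphi.intervalIntegrable
    intro t ht
    exact nphi_mono ht.1 ht.2
  rw [intervalIntegral.integral_const, smul_eq_mul] at hmono
  have : (0 - w) * nphi w = (-w) * nphi w := by ring
  linarith [hmono, hs, this.symm.le, this.le]

lemma gap_upper {z : ℝ} (hz : z ≤ 0) : 1/2 - stdNormalCDF z ≤ (-z) * nphi 0 := by
  have hs := cdf_sub z 0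
  rw [cdf_zero] at hs
  have hmono : ∫ t in z..(0:ℝ), nphi t ≤ ∫ t in z..(0:ℝ), nphi 0 := by
    apply intervalIntegral.integral_mono_on hz
      integrable_nphi.intervalIntegrable intervalIntegrable_const
    intro t _
    exact nphi_le_nphi_zero t
  rw [intervalIntegral.integral_const, smul_eq_mul] at hmono
  have : (0 - z) * nphi 0 = (-z) * nphi 0 := by ring
  linarith

lemma cE_nphi (w : ℝ) : Real.sqrt (2*Real.pi) * Real.exp (w^2/2) * nphi w = 1 := by
  have hc : Real.sqrt (2*Real.pi) ≠ 0 := by positivity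
  unfold nphi
  rw [show Real.sqrt (2*Real.pi) * Real.exp (w^2/2) * ((Real.sqrt (2*Real.pi))⁻¹ * Real.exp (-w^2/2))
      = (Real.sqrt (2*Real.pi) * (Real.sqrt (2*Real.pi))⁻¹) * (Real.exp (w^2/2) * Real.exp (-w^2/2)) by ring,
    mul_inv_cancel₀ hc, ← Real.exp_add]
  rw [show w^2/2 + -w^2/2 = 0 by ring]
  norm_num

lemma hE2 (w : ℝ) : Real.exp (w^2/2) * (2 - w^2) ≤ 2 := by
  have h := Real.add_one_le_exp (-(w^2)/2)
  have h2 : Real.exp (-(w^2)/2) = (Real.exp (w^2/2))⁻¹ := by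
    rw [← Real.exp_neg]
    norm_num [neg_div]
  have hE : 0 < Real.exp (w^2/2) := Real.exp_pos _
  rw [h2] at h
  have h3 := mul_le_mul_of_nonneg_left h hE.le
  rw [mul_inv_cancel₀ hE.ne'] at h3
  nlinarith

lemma branch_nonneg (a b : ℝ) :
    0 ≤ Real.sqrt (2*Real.pi) * Real.exp (a^2/2) * stdNormalCDF a * (1 - stdNormalCDF b) := by
  have := cdf_nonneg a
  have := cdf_le_one b
  have : (0:ℝ) ≤ 1 - stdNormalCDF b := by linarith
  positivity

lemma branch_le_one {z w : ℝ} (hwz : w ≤ z) :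
    Real.sqrt (2*Real.pi) * Real.exp (w^2/2) * stdNormalCDF w * (1 - stdNormalCDF z) ≤ 1 := by
  have hcb := csqrt_bounds
  have hcpos : 0 < Real.sqrt (2*Real.pi) := by linarith [hcb.1]
  have hcsq : (Real.sqrt (2*Real.pi))^2 = 2*Real.pi := Real.sq_sqrt (by positivity)
  have hE1 : 1 ≤ Real.exp (w^2/2) := Real.one_le_exp (by positivity)
  have hEpos : (0:ℝ) < Real.exp (w^2/2) := Real.exp_pos _
  have hQ0 : (0:ℝ) ≤ 1 - stdNormalCDF z := by linarith [cdf_le_one z]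
  have hP0 : (0:ℝ) ≤ stdNormalCDF w := cdf_nonneg w
  rcases le_or_gt w 0 with hw | hw
  · -- t = -w
    have ht0 : (0:ℝ) ≤ -w := by linarith
    have hQ : 1 - stdNormalCDF z ≤ 1/2 + (-w) * nphi 0 := by
      rcases le_or_gt z 0 with hz | hz
      · have h1 := gap_upper hz
        have h2 : (-z) * nphi 0 ≤ (-w) * nphi 0 :=
          mul_le_mul_of_nonneg_right (by linarith) (nphi_pos 0).le
        linarith
      · have h1 : stdNormalCDF 0 ≤ stdNormalCDF z := cdf_mono hz.le
        rw [cdf_zero] at h1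
        nlinarith [nphi_pos 0]
    rcases le_or_gt (-w) 0.84 with h84 | h84
    · have hP : stdNormalCDF w ≤ 1/2 - (-w) * nphi w := by
        have := gap_lower hw; linarith
      calc Real.sqrt (2*Real.pi) * Real.exp (w^2/2) * stdNormalCDF w * (1 - stdNormalCDF z)
          = Real.sqrt (2*Real.pi) * Real.exp (w^2/2) * (stdNormalCDF w * (1 - stdNormalCDF z)) := by ring
        _ ≤ 1 := core_small (-w) _ _ (nphi w) (nphi 0) _ _ hcsq hcpos hE1
            (by have := hE2 w; nlinarith) ht0 h84 (cE_nphi w)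
            (by rw [nphi_zero]; field_simp) hP0 hQ0 hP hQ
    · have hP : (-w) * stdNormalCDF w ≤ nphi w := mills (by linarith)
      calc Real.sqrt (2*Real.pi) * Real.exp (w^2/2) * stdNormalCDF w * (1 - stdNormalCDF z)
          = Real.sqrt (2*Real.pi) * Real.exp (w^2/2) * (stdNormalCDF w * (1 - stdNormalCDF z)) := by ring
        _ ≤ 1 := core_big (-w) _ _ (nphi w) (nphi 0) _ _ hcb.1 hEpos h84.le (cE_nphi w)
            (by rw [nphi_zero]; field_simp) hP0 hQ0 hP hQ
  · -- w > 0, t = w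
    have ht0 : (0:ℝ) ≤ w := hw.le
    have hnegw : -w ≤ 0 := by linarith
    have hnphi : nphi (-w) = nphi w := nphi_neg w
    have hQ : stdNormalCDF w ≤ 1/2 + w * nphi 0 := by
      have h1 := gap_upper hnegw
      rw [cdf_neg] at h1
      have : -(-w) = w := neg_neg w
      rw [this] at h1
      linarith
    have hPP : 1 - stdNormalCDF z ≤ stdNormalCDF (-w) := by
      rw [cdf_neg]
      have := cdf_mono hwz
      linarith
    rcases le_or_gt w 0.84 with h84 | h84
    · have hP : 1 - stdNormalCDF z ≤ 1/2 - w * nphi w := by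
        have h1 := gap_lower hnegw
        rw [hnphi, neg_neg] at h1
        linarith
      calc Real.sqrt (2*Real.pi) * Real.exp (w^2/2) * stdNormalCDF w * (1 - stdNormalCDF z)
          = Real.sqrt (2*Real.pi) * Real.exp (w^2/2) * ((1 - stdNormalCDF z) * stdNormalCDF w) := by ring
        _ ≤ 1 := core_small w _ _ (nphi w) (nphi 0) _ _ hcsq hcpos hE1
            (by have := hE2 w; nlinarith) ht0 h84 (cE_nphi w)
            (by rw [nphi_zero]; field_simp) hQ0 hP0 hP hQ
    · have hP : w * (1 - stdNormalCDF z) ≤ nphi w := by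
        have hm := mills (by linarith : -w < 0)
        rw [neg_neg, hnphi] at hm
        nlinarith
      calc Real.sqrt (2*Real.pi) * Real.exp (w^2/2) * stdNormalCDF w * (1 - stdNormalCDF z)
          = Real.sqrt (2*Real.pi) * Real.exp (w^2/2) * ((1 - stdNormalCDF z) * stdNormalCDF w) := by ring
        _ ≤ 1 := core_big w _ _ (nphi w) (nphi 0) _ _ hcb.1 hEpos h84.le (cE_nphi w)
            (by rw [nphi_zero]; field_simp) hQ0 hP0 hP hQ

lemma branch_wf_lower {z w : ℝ} (hwz : w ≤ z) :
    -1 ≤ w * (Real.sqrt (2*Real.pi) * Real.exp (w^2/2) * stdNormalCDF w * (1 - stdNormalCDF z)) := by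
  rcases le_or_gt 0 w with hw | hw
  · nlinarith [branch_nonneg w z]
  · have hm := mills hw
    have hQ0 : (0:ℝ) ≤ 1 - stdNormalCDF z := by linarith [cdf_le_one z]
    have hQ1 : 1 - stdNormalCDF z ≤ 1 := by linarith [cdf_nonneg z]
    have hc := cE_nphi w
    have hcE : 0 < Real.sqrt (2*Real.pi) * Real.exp (w^2/2) := by positivity
    have h1 : (-w) * (Real.sqrt (2*Real.pi) * Real.exp (w^2/2) * stdNormalCDF w) ≤ 1 := by
      calc (-w) * (Real.sqrt (2*Real.pi) * Real.exp (w^2/2) * stdNormalCDF w)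
          = (Real.sqrt (2*Real.pi) * Real.exp (w^2/2)) * ((-w) * stdNormalCDF w) := by ring
        _ ≤ (Real.sqrt (2*Real.pi) * Real.exp (w^2/2)) * nphi w :=
            mul_le_mul_of_nonneg_left hm hcE.le
        _ = 1 := by rw [← hc]
    have h2 : 0 ≤ (-w) * (Real.sqrt (2*Real.pi) * Real.exp (w^2/2) * stdNormalCDF w) := by
      have := cdf_nonneg w
      have hnw : (0:ℝ) ≤ -w := by linarith
      positivity
    nlinarith [mul_le_one₀ h1 hQ0 hQ1]

lemma branch_wf_upper {z w : ℝ} (hwz : w ≤ z) :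
    w * (Real.sqrt (2*Real.pi) * Real.exp (w^2/2) * stdNormalCDF w * (1 - stdNormalCDF z))
      ≤ stdNormalCDF z := by
  rcases le_or_gt w 0 with hw | hw
  · nlinarith [branch_nonneg w z, cdf_nonneg z]
  · have hm := mills (show -w < 0 by linarith)
    rw [neg_neg, nphi_neg] at hm
    have hPP : 1 - stdNormalCDF z ≤ stdNormalCDF (-w) := by
      rw [cdf_neg]
      linarith [cdf_mono hwz]
    have hc := cE_nphi w
    have hA : 0 ≤ Real.sqrt (2*Real.pi) * Real.exp (w^2/2) * stdNormalCDF w := by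
      have := cdf_nonneg w; positivity
    calc w * (Real.sqrt (2*Real.pi) * Real.exp (w^2/2) * stdNormalCDF w * (1 - stdNormalCDF z))
        = (Real.sqrt (2*Real.pi) * Real.exp (w^2/2) * stdNormalCDF w) * (w * (1 - stdNormalCDF z)) := by ring
      _ ≤ (Real.sqrt (2*Real.pi) * Real.exp (w^2/2) * stdNormalCDF w) * (w * stdNormalCDF (-w)) := by
          apply mul_le_mul_of_nonneg_left _ hA
          exact mul_le_mul_of_nonneg_left hPP hw.le
      _ ≤ (Real.sqrt (2*Real.pi) * Real.exp (w^2/2) * stdNormalCDF w) * nphi w :=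
          mul_le_mul_of_nonneg_left hm hA
      _ = stdNormalCDF w * (Real.sqrt (2*Real.pi) * Real.exp (w^2/2) * nphi w) := by ring
      _ = stdNormalCDF w := by rw [hc]; ring
      _ ≤ stdNormalCDF z := cdf_mono hwz

lemma val_nonneg (w a b : ℝ) :
    0 ≤ Real.sqrt (2*Real.pi) * Real.exp (w^2/2) * stdNormalCDF a * (1 - stdNormalCDF b) := by
  have h1 := cdf_nonneg a
  have h2 : (0:ℝ) ≤ 1 - stdNormalCDF b := by linarith [cdf_le_one b]
  positivity

lemma branch2_le_one {z w : ℝ} (hwz : z < w) :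
    Real.sqrt (2*Real.pi) * Real.exp (w^2/2) * stdNormalCDF z * (1 - stdNormalCDF w) ≤ 1 := by
  have h := branch_le_one (show (-w:ℝ) ≤ -z by linarith)
  rw [neg_sq, cdf_neg, cdf_neg] at h
  calc Real.sqrt (2*Real.pi) * Real.exp (w^2/2) * stdNormalCDF z * (1 - stdNormalCDF w)
      = Real.sqrt (2*Real.pi) * Real.exp (w^2/2) * (1 - stdNormalCDF w) * (1 - (1 - stdNormalCDF z)) := by ring
    _ ≤ 1 := h

lemma branch2_wf_upper {z w : ℝ} (hwz : z < w) :
    w * (Real.sqrt (2*Real.pi) * Real.exp (w^2/2) * stdNormalCDF z * (1 - stdNormalCDF w)) ≤ 1 := by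
  have h := branch_wf_lower (show (-w:ℝ) ≤ -z by linarith)
  rw [neg_sq, cdf_neg, cdf_neg] at h
  nlinarith [h]

lemma branch2_wf_lower {z w : ℝ} (hwz : z < w) :
    stdNormalCDF z - 1
      ≤ w * (Real.sqrt (2*Real.pi) * Real.exp (w^2/2) * stdNormalCDF z * (1 - stdNormalCDF w)) := by
  have h := branch_wf_upper (show (-w:ℝ) ≤ -z by linarith)
  rw [neg_sq, cdf_neg, cdf_neg] at h
  nlinarith [h]

lemma hasDerivAt_expsq (w : ℝ) :
    HasDerivAt (fun x : ℝ => Real.exp (x^2/2)) (w * Real.exp (w^2/2)) w := by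
  have h1 : HasDerivAt (fun x : ℝ => x^2/2) w w := by
    have := (hasDerivAt_pow 2 w).div_const 2
    refine this.congr_deriv ?_
    simp
  simpa [mul_comm] using h1.exp

lemma hasDerivAt_branch1 (z w : ℝ) :
    HasDerivAt (fun x => Real.sqrt (2*Real.pi) * Real.exp (x^2/2) * stdNormalCDF x * (1 - stdNormalCDF z))
      (w * (Real.sqrt (2*Real.pi) * Real.exp (w^2/2) * stdNormalCDF w * (1 - stdNormalCDF z))
        + (1 - stdNormalCDF z)) w := by
  have h1 := (((hasDerivAt_expsq w).mul (cdf_hasDerivAt w)).const_mul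
    (Real.sqrt (2*Real.pi))).mul_const (1 - stdNormalCDF z)
  refine HasDerivAt.congr_of_eventuallyEq (h1.congr_deriv ?_) (Filter.Eventually.of_forall fun x => ?_)
  · have hc := cE_nphi w
    linear_combination (1 - stdNormalCDF z) * hc
  · simp only [Pi.mul_apply]; ring

lemma hasDerivAt_branch2 (z w : ℝ) :
    HasDerivAt (fun x => Real.sqrt (2*Real.pi) * Real.exp (x^2/2) * stdNormalCDF z * (1 - stdNormalCDF x))
      (w * (Real.sqrt (2*Real.pi) * Real.exp (w^2/2) * stdNormalCDF z * (1 - stdNormalCDF w))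
        - stdNormalCDF z) w := by
  have hsub : HasDerivAt (fun x : ℝ => 1 - stdNormalCDF x) (-(nphi w)) w :=
    (cdf_hasDerivAt w).const_sub 1
  have h1 := (((hasDerivAt_expsq w).mul hsub).const_mul
    (Real.sqrt (2*Real.pi))).mul_const (stdNormalCDF z)
  refine HasDerivAt.congr_of_eventuallyEq (h1.congr_deriv ?_) (Filter.Eventually.of_forall fun x => ?_)
  · have hc := cE_nphi w
    linear_combination -(stdNormalCDF z) * hc
  · simp only [Pi.mul_apply]; ring

/-- The Stein solution `f_z` satisfies `‖f_z‖ ≤ 1`, `‖f_z'‖ ≤ 1`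
(where, by the Stein equation, `f_z'(w) = w f_z(w) + 1{w ≤ z} - Φ(z)`), and
`sup_w |w f_z(w)| ≤ 1`. -/
theorem stmt4 (z : ℝ) :
    (∀ w : ℝ, |steinSolution z w| ≤ 1) ∧
    (∀ w : ℝ, w ≠ z → HasDerivAt (steinSolution z)
        (w * steinSolution z w + (if w ≤ z then (1:ℝ) else 0) - stdNormalCDF z) w) ∧
    (∀ w : ℝ, |w * steinSolution z w + (if w ≤ z then (1:ℝ) else 0) - stdNormalCDF z| ≤ 1) ∧
    (∀ w : ℝ, |w * steinSolution z w| ≤ 1) := by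
  have hval : ∀ w : ℝ, w ≤ z → steinSolution z w
      = Real.sqrt (2*Real.pi) * Real.exp (w^2/2) * stdNormalCDF w * (1 - stdNormalCDF z) := by
    intro w hw; rw [steinSolution, if_pos hw]
  have hval2 : ∀ w : ℝ, z < w → steinSolution z w
      = Real.sqrt (2*Real.pi) * Real.exp (w^2/2) * stdNormalCDF z * (1 - stdNormalCDF w) := by
    intro w hw; rw [steinSolution, if_neg (not_le.2 hw)]
  refine ⟨?_, ?_, ?_, ?_⟩
  · intro w
    rcases le_or_gt w z with h | h
    · rw [hval w h, abs_le]
      exact ⟨by linarith [val_nonneg w w z], branch_le_one h⟩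
    · rw [hval2 w h, abs_le]
      refine ⟨by linarith [val_nonneg w z w], branch2_le_one h⟩
  · intro w hne
    rcases lt_or_gt_of_ne hne with h | h
    · have hd := hasDerivAt_branch1 z w
      have heq : steinSolution z =ᶠ[nhds w]
          (fun x => Real.sqrt (2*Real.pi) * Real.exp (x^2/2) * stdNormalCDF x * (1 - stdNormalCDF z)) := by
        filter_upwards [Iio_mem_nhds h] with x hx
        exact hval x (le_of_lt hx)
      have hd2 := hd.congr_of_eventuallyEq heq
      refine hd2.congr_deriv ?_
      rw [hval w h.le, if_pos h.le]
      ring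
    · have hd := hasDerivAt_branch2 z w
      have heq : steinSolution z =ᶠ[nhds w]
          (fun x => Real.sqrt (2*Real.pi) * Real.exp (x^2/2) * stdNormalCDF z * (1 - stdNormalCDF x)) := by
        filter_upwards [Ioi_mem_nhds h] with x hx
        exact hval2 x hx
      have hd2 := hd.congr_of_eventuallyEq heq
      refine hd2.congr_deriv ?_
      rw [hval2 w h, if_neg (not_le.2 h)]
      ring
  · intro w
    rcases le_or_gt w z with h | h
    · rw [hval w h, if_pos h, abs_le]
      constructor
      · linarith [branch_wf_lower h, cdf_le_one z]
      · linarith [branch_wf_upper h]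
    · rw [hval2 w h, if_neg (not_le.2 h), abs_le]
      constructor
      · linarith [branch2_wf_lower h]
      · linarith [branch2_wf_upper h, cdf_nonneg z]
  · intro w
    rcases le_or_gt w z with h | h
    · rw [hval w h, abs_le]
      exact ⟨branch_wf_lower h, le_trans (branch_wf_upper h) (cdf_le_one z)⟩
    · rw [hval2 w h, abs_le]
      exact ⟨le_trans (by linarith [cdf_nonneg z]) (branch2_wf_lower h), branch2_wf_upper h⟩
end

section
/- Hoeffding decomposition orthogonality: for the components f_{A,B} defined by inclusion-exclusion from conditional expectations of a symmetric kernel f of i.i.d. variables X_1,…,X_k and Y_{i,j} (1≤i<j≤k), and for any A ⊂ [k], B ⊂ [k]², (A,B) ≠ (∅,∅), and any Ã ⊂ A, B̃ ⊂ B with (Ã,B̃) ≠ (A,B), one has E[ f_{A,B}(X_A; Y_B) | X_Ã, Y_B̃ ] = 0 almost surely. -/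
open MeasureTheory ProbabilityTheory

-- combinatorial helpers
private lemma neg_one_pow_sub_ag {m n : ℕ} (h : m ≤ n) :
    (-1 : ℝ) ^ (n - m) = (-1) ^ n * (-1) ^ m := by
  have h1 := pow_sub_mul_pow (-1 : ℝ) h
  have hm : (-1 : ℝ) ^ m * (-1) ^ m = 1 := by
    rw [← pow_add]; exact Even.neg_one_pow ⟨m, rfl⟩
  calc (-1 : ℝ) ^ (n - m) = (-1 : ℝ) ^ (n - m) * ((-1) ^ m * (-1) ^ m) := by rw [hm, mul_one]
    _ = ((-1 : ℝ) ^ (n - m) * (-1) ^ m) * (-1) ^ m := by ring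
    _ = (-1) ^ n * (-1) ^ m := by rw [h1]

private lemma sum_powerset_neg_one_real {α : Type*} {x : Finset α} (h0 : x.Nonempty) :
    (∑ m ∈ x.powerset, (-1 : ℝ) ^ m.card) = 0 := by
  have := Finset.sum_powerset_neg_one_pow_card_of_nonempty (x := x) h0
  have h2 : ((∑ m ∈ x.powerset, (-1 : ℤ) ^ m.card : ℤ) : ℝ)
      = ∑ m ∈ x.powerset, (-1 : ℝ) ^ m.card := by push_cast; rfl
  rw [← h2, this]; simp

private lemma key1 {ι : Type*} [DecidableEq ι] {A At : Finset ι} (hAt : At ⊆ A) (hne : At ≠ A)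
    (w : Finset ι → ℝ) :
    ∑ A' ∈ A.powerset, (-1 : ℝ) ^ A'.card * w (A' ∩ At) = 0 := by
  have hbij : ∑ A' ∈ A.powerset, (-1 : ℝ) ^ A'.card * w (A' ∩ At)
      = ∑ p ∈ At.powerset ×ˢ (A \ At).powerset,
          (-1 : ℝ) ^ (p.1 ∪ p.2).card * w ((p.1 ∪ p.2) ∩ At) := by
    refine Finset.sum_nbij' (fun A' => (A' ∩ At, A' \ At)) (fun p => p.1 ∪ p.2) ?_ ?_ ?_ ?_ ?_
    · intro A' hA'
      simp only [Finset.mem_product, Finset.mem_powerset] at *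
      exact ⟨Finset.inter_subset_right, Finset.sdiff_subset_sdiff hA' (le_refl At)⟩
    · intro p hp
      simp only [Finset.mem_product, Finset.mem_powerset] at *
      exact Finset.union_subset (hp.1.trans hAt) (hp.2.trans (Finset.sdiff_subset))
    · intro A' _
      simp only
      rw [Finset.union_comm]; exact Finset.sdiff_union_inter A' At
    · intro p hp
      simp only [Finset.mem_product, Finset.mem_powerset] at hp
      have h1 : (p.1 ∪ p.2) ∩ At = p.1 := by
        rw [Finset.union_inter_distrib_right]
        have : p.2 ∩ At = ∅ := by
          apply Finset.eq_empty_of_forall_notMem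
          intro x hx
          rcases Finset.mem_inter.1 hx with ⟨h2, h3⟩
          exact (Finset.mem_sdiff.1 (hp.2 h2)).2 h3
        rw [this, Finset.union_empty, Finset.inter_eq_left.2 hp.1]
      have h2 : (p.1 ∪ p.2) \ At = p.2 := by
        rw [Finset.union_sdiff_distrib]
        have ha : p.1 \ At = ∅ := Finset.sdiff_eq_empty_iff_subset.2 hp.1
        have hb : p.2 \ At = p.2 := by
          rw [Finset.sdiff_eq_self_iff_disjoint]
          exact Finset.disjoint_left.2 fun x hx hx' => (Finset.mem_sdiff.1 (hp.2 hx)).2 hx'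
        rw [ha, hb, Finset.empty_union]
      exact Prod.ext h1 h2
    · intro A' _
      simp only
      have h3 : A' ∩ At ∪ A' \ At = A' := by
        rw [Finset.union_comm]; exact Finset.sdiff_union_inter A' At
      rw [h3]
  rw [hbij, Finset.sum_product]
  have hzero : ∀ C ∈ At.powerset,
      (∑ E ∈ (A \ At).powerset, (-1 : ℝ) ^ (C ∪ E).card * w ((C ∪ E) ∩ At)) = 0 := by
    intro C hC
    simp only [Finset.mem_powerset] at hC
    have hterm : ∀ E ∈ (A \ At).powerset,
        (-1 : ℝ) ^ (C ∪ E).card * w ((C ∪ E) ∩ At)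
          = ((-1 : ℝ) ^ C.card * w C) * (-1) ^ E.card := by
      intro E hE
      simp only [Finset.mem_powerset] at hE
      have hd : Disjoint C E := by
        refine Finset.disjoint_left.2 fun x hx hx' => ?_
        exact (Finset.mem_sdiff.1 (hE hx')).2 (hC hx)
      have hcard : (C ∪ E).card = C.card + E.card := Finset.card_union_of_disjoint hd
      have hint : (C ∪ E) ∩ At = C := by
        rw [Finset.union_inter_distrib_right]
        have : E ∩ At = ∅ := by
          apply Finset.eq_empty_of_forall_notMem
          intro x hx
          rcases Finset.mem_inter.1 hx with ⟨h2, h3⟩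
          exact (Finset.mem_sdiff.1 (hE h2)).2 h3
        rw [this, Finset.union_empty, Finset.inter_eq_left.2 hC]
      rw [hcard, hint, pow_add]; ring
    rw [Finset.sum_congr rfl hterm, ← Finset.mul_sum,
      sum_powerset_neg_one_real (Finset.sdiff_nonempty.2 (fun h => hne (le_antisymm hAt h))),
      mul_zero]
  exact Finset.sum_eq_zero hzero

private lemma alg_sum_zero {ι κ : Type*} [DecidableEq ι] [DecidableEq κ]
    {A At : Finset ι} {B Bt : Finset κ} (hAt : At ⊆ A) (hBt : Bt ⊆ B)
    (hne : ¬(At = A ∧ Bt = B)) (u : Finset ι → Finset κ → ℝ) :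
    ∑ A' ∈ A.powerset, ∑ B' ∈ B.powerset,
      (-1 : ℝ) ^ (A.card + B.card - A'.card - B'.card) * u (A' ∩ At) (B' ∩ Bt) = 0 := by
  have hsign : ∀ A' ∈ A.powerset, ∀ B' ∈ B.powerset,
      (-1 : ℝ) ^ (A.card + B.card - A'.card - B'.card)
        = (-1) ^ (A.card + B.card) * ((-1) ^ A'.card * (-1) ^ B'.card) := by
    intro A' hA' B' hB'
    simp only [Finset.mem_powerset] at hA' hB'
    have hle : A'.card + B'.card ≤ A.card + B.card :=
      add_le_add (Finset.card_le_card hA') (Finset.card_le_card hB')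
    rw [Nat.sub_sub, neg_one_pow_sub_ag hle, pow_add, pow_add]
  rw [not_and_or] at hne
  rcases hne with h | h
  · rw [Finset.sum_comm]
    refine Finset.sum_eq_zero fun B' hB' => ?_
    have : ∀ A' ∈ A.powerset,
        (-1 : ℝ) ^ (A.card + B.card - A'.card - B'.card) * u (A' ∩ At) (B' ∩ Bt)
          = ((-1 : ℝ) ^ (A.card + B.card) * (-1) ^ B'.card)
            * ((-1) ^ A'.card * u (A' ∩ At) (B' ∩ Bt)) := by
      intro A' hA'
      rw [hsign A' hA' B' hB']; ring
    rw [Finset.sum_congr rfl this, ← Finset.mul_sum,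
      key1 hAt h (fun C => u C (B' ∩ Bt)), mul_zero]
  · refine Finset.sum_eq_zero fun A' hA' => ?_
    have : ∀ B' ∈ B.powerset,
        (-1 : ℝ) ^ (A.card + B.card - A'.card - B'.card) * u (A' ∩ At) (B' ∩ Bt)
          = ((-1 : ℝ) ^ (A.card + B.card) * (-1) ^ A'.card)
            * ((-1) ^ B'.card * u (A' ∩ At) (B' ∩ Bt)) := by
      intro B' hB'
      rw [hsign A' hA' B' hB']; ring
    rw [Finset.sum_congr rfl this, ← Finset.mul_sum,
      key1 hBt h (fun D => u (A' ∩ At) D), mul_zero]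

private lemma setIntegral_inter_indep {Ω : Type*} {G L : MeasurableSpace Ω}
    [m0 : MeasurableSpace Ω] {μ : Measure Ω} [IsProbabilityMeasure μ]
    (hG : G ≤ m0) (hL : L ≤ m0)
    (hindep : Indep G L μ) {u : Ω → ℝ} (hu : Integrable u μ)
    (hum : StronglyMeasurable[G] u)
    {K' L' : Set Ω} (hK' : MeasurableSet[G] K') (hL' : MeasurableSet[L] L') :
    ∫ x in K' ∩ L', u x ∂μ = (∫ x in K', u x ∂μ) * (μ L').toReal := by
  have hK'0 : MeasurableSet[m0] K' := hG _ hK'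
  have hL'0 : MeasurableSet[m0] L' := hL _ hL'
  have hfun : IndepFun (K'.indicator u) (L'.indicator (fun _ => (1 : ℝ))) μ := by
    rw [IndepFun_iff_Indep]
    refine indep_of_indep_of_le_left (indep_of_indep_of_le_right hindep ?_) ?_
    · exact Measurable.comap_le (measurable_const.indicator hL')
    · exact Measurable.comap_le ((hum.measurable).indicator hK')
  have hprod : (fun x => K'.indicator u x * L'.indicator (fun _ => (1 : ℝ)) x)
      = (K' ∩ L').indicator u := by
    funext x
    by_cases h1 : x ∈ K' <;> by_cases h2 : x ∈ L' <;>
      simp [Set.indicator, h1, h2]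
  have hmul := hfun.integral_fun_mul_eq_mul_integral (hu.indicator hK'0).aestronglyMeasurable
    ((integrable_const (1 : ℝ)).indicator hL'0).aestronglyMeasurable
  calc ∫ x in K' ∩ L', u x ∂μ = ∫ x, (K' ∩ L').indicator u x ∂μ :=
        (integral_indicator (hK'0.inter hL'0)).symm
    _ = ∫ x, K'.indicator u x * L'.indicator (fun _ => (1 : ℝ)) x ∂μ := by rw [hprod]
    _ = (∫ x, K'.indicator u x ∂μ) * ∫ x, L'.indicator (fun _ => (1 : ℝ)) x ∂μ := hmul
    _ = (∫ x in K', u x ∂μ) * (μ L').toReal := by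
        rw [integral_indicator hK'0, integral_indicator hL'0]
        simp [Measure.restrict_apply_univ, measureReal_def]

private lemma condexp_condexp_sup_of_indep {Ω : Type*} {G K L : MeasurableSpace Ω}
    [m0 : MeasurableSpace Ω] (μ : Measure Ω) [IsProbabilityMeasure μ]
    (hG : G ≤ m0) (hL : L ≤ m0) (hKG : K ≤ G)
    (hindep : Indep G L μ) {f : Ω → ℝ} (hf : Integrable f μ) :
    μ[ μ[f | G] | K ⊔ L ] =ᵐ[μ] μ[f | K] := by
  have hK : K ≤ m0 := hKG.trans hG
  have hKL : K ⊔ L ≤ m0 := sup_le hK hL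
  haveI : SigmaFinite (μ.trim hKL) := inferInstance
  haveI : SigmaFinite (μ.trim hK) := inferInstance
  haveI : SigmaFinite (μ.trim hG) := inferInstance
  set π : Set (Set Ω) :=
    {s | ∃ K' L', MeasurableSet[K] K' ∧ MeasurableSet[L] L' ∧ s = K' ∩ L'} with hπ
  have hgen : K ⊔ L = MeasurableSpace.generateFrom π := by
    refine le_antisymm (sup_le ?_ ?_) (MeasurableSpace.generateFrom_le ?_)
    · intro s hs
      exact MeasurableSpace.measurableSet_generateFrom
        ⟨s, Set.univ, hs, MeasurableSet.univ, (Set.inter_univ s).symm⟩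
    · intro s hs
      exact MeasurableSpace.measurableSet_generateFrom
        ⟨Set.univ, s, MeasurableSet.univ, hs, (Set.univ_inter s).symm⟩
    · rintro t ⟨K', L', hK', hL', rfl⟩
      exact MeasurableSet.inter ((le_sup_left : K ≤ K ⊔ L) _ hK')
        ((le_sup_right : L ≤ K ⊔ L) _ hL')
  have hpi : IsPiSystem π := by
    rintro t1 ⟨K1, L1, hK1, hL1, rfl⟩ t2 ⟨K2, L2, hK2, hL2, rfl⟩ _
    exact ⟨K1 ∩ K2, L1 ∩ L2, hK1.inter hK2, hL1.inter hL2, by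
      rw [Set.inter_inter_inter_comm]⟩
  have key : ∀ s, MeasurableSet[K ⊔ L] s →
      ∫ x in s, (μ[f|K]) x ∂μ = ∫ x in s, (μ[f|G]) x ∂μ := by
    refine MeasurableSpace.induction_on_inter (m := K ⊔ L)
      (C := fun s _ => ∫ x in s, (μ[f|K]) x ∂μ = ∫ x in s, (μ[f|G]) x ∂μ)
      hgen hpi ?_ ?_ ?_ ?_
    · simp
    · rintro t ⟨K', L', hK', hL', rfl⟩
      rw [setIntegral_inter_indep hG hL hindep integrable_condExp
          (stronglyMeasurable_condExp.mono hKG) (hKG _ hK') hL',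
        setIntegral_inter_indep hG hL hindep integrable_condExp
          stronglyMeasurable_condExp (hKG _ hK') hL',
        setIntegral_condExp hK hf hK', setIntegral_condExp hG hf (hKG _ hK')]
    · intro t ht hC
      have ht0 : MeasurableSet[m0] t := hKL _ ht
      have e1 := integral_add_compl ht0 (integrable_condExp : Integrable (μ[f|K]) μ)
      have e2 := integral_add_compl ht0 (integrable_condExp : Integrable (μ[f|G]) μ)
      have etot : ∫ x, (μ[f|K]) x ∂μ = ∫ x, (μ[f|G]) x ∂μ := by
        rw [integral_condExp hK, integral_condExp hG]
      linarith
    · intro g hdisj hmeas hC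
      have hm0 : ∀ i, MeasurableSet[m0] (g i) := fun i => hKL _ (hmeas i)
      rw [integral_iUnion hm0 hdisj integrable_condExp.integrableOn,
        integral_iUnion hm0 hdisj integrable_condExp.integrableOn]
      exact tsum_congr hC
  refine (ae_eq_condExp_of_forall_setIntegral_eq hKL integrable_condExp
    (fun s _ _ => integrable_condExp.integrableOn)
    (fun s hs _ => key s hs) ?_).symm
  exact (stronglyMeasurable_condExp.mono (le_sup_left : K ≤ K ⊔ L)).aestronglyMeasurable

private lemma iIndep_sum_family {Ω 𝒳 𝒴 : Type*} {ι κ : Type*}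
    [m𝒳 : MeasurableSpace 𝒳] [m𝒴 : MeasurableSpace 𝒴]
    [m0 : MeasurableSpace Ω] {μ : Measure Ω} [IsProbabilityMeasure μ]
    {X : ι → Ω → 𝒳} {Y : κ → Ω → 𝒴}
    (hXind : iIndepFun X μ)
    (hYind : iIndepFun Y μ)
    (hXY : IndepFun (fun ω => fun i => X i ω) (fun ω => fun p => Y p ω) μ) :
    iIndep (Sum.elim (fun i => MeasurableSpace.comap (X i) m𝒳)
      (fun p => MeasurableSpace.comap (Y p) m𝒴)) μ := by
  rw [iIndep_iff]
  intro S s hs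
  classical
  have hSplit : ⋂ i ∈ S, s i =
      (⋂ a ∈ S.toLeft, s (Sum.inl a)) ∩ (⋂ b ∈ S.toRight, s (Sum.inr b)) := by
    ext x
    simp only [Set.mem_iInter, Set.mem_inter_iff, Finset.mem_toLeft, Finset.mem_toRight]
    constructor
    · intro h; exact ⟨fun a ha => h _ ha, fun b hb => h _ hb⟩
    · rintro ⟨h1, h2⟩ (i | j) hi
      · exact h1 i hi
      · exact h2 j hi
  have hProd : ∏ i ∈ S, μ (s i) =
      (∏ a ∈ S.toLeft, μ (s (Sum.inl a))) * ∏ b ∈ S.toRight, μ (s (Sum.inr b)) := by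
    conv_lhs => rw [← Finset.toLeft_disjSum_toRight (u := S)]
    rw [Finset.prod_disjSum]
  have hmleft : ∀ a : ι, MeasurableSpace.comap (X a) m𝒳 ≤
      MeasurableSpace.comap (fun ω => fun i => X i ω) MeasurableSpace.pi := by
    intro a
    have h1 : X a = (fun g : ι → 𝒳 => g a) ∘ (fun ω => fun i => X i ω) := rfl
    calc MeasurableSpace.comap (X a) m𝒳
        = (m𝒳.comap fun g : ι → 𝒳 => g a).comap (fun ω => fun i => X i ω) := by
          rw [MeasurableSpace.comap_comp, ← h1]
      _ ≤ MeasurableSpace.comap (fun ω => fun i => X i ω) MeasurableSpace.pi :=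
          MeasurableSpace.comap_mono (measurable_pi_apply a).comap_le
  have hmright : ∀ b : κ, MeasurableSpace.comap (Y b) m𝒴 ≤
      MeasurableSpace.comap (fun ω => fun p => Y p ω) MeasurableSpace.pi := by
    intro b
    have h1 : Y b = (fun g : κ → 𝒴 => g b) ∘ (fun ω => fun p => Y p ω) := rfl
    calc MeasurableSpace.comap (Y b) m𝒴
        = (m𝒴.comap fun g : κ → 𝒴 => g b).comap (fun ω => fun p => Y p ω) := by
          rw [MeasurableSpace.comap_comp, ← h1]
      _ ≤ MeasurableSpace.comap (fun ω => fun p => Y p ω) MeasurableSpace.pi :=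
          MeasurableSpace.comap_mono (measurable_pi_apply b).comap_le
  have hu : MeasurableSet[MeasurableSpace.comap (fun ω => fun i => X i ω) MeasurableSpace.pi]
      (⋂ a ∈ S.toLeft, s (Sum.inl a)) := by
    refine MeasurableSet.biInter (Finset.countable_toSet _) fun a ha => ?_
    exact hmleft a _ (hs (Sum.inl a) (Finset.mem_toLeft.1 ha))
  have hv : MeasurableSet[MeasurableSpace.comap (fun ω => fun p => Y p ω) MeasurableSpace.pi]
      (⋂ b ∈ S.toRight, s (Sum.inr b)) := by
    refine MeasurableSet.biInter (Finset.countable_toSet _) fun b hb => ?_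
    exact hmright b _ (hs (Sum.inr b) (Finset.mem_toRight.1 hb))
  have hXYmul := ((IndepFun_iff _ _ _).1 hXY) _ _ hu hv
  have hXprod : μ (⋂ a ∈ S.toLeft, s (Sum.inl a))
      = ∏ a ∈ S.toLeft, μ (s (Sum.inl a)) :=
    hXind.meas_biInter fun a ha => hs (Sum.inl a) (Finset.mem_toLeft.1 ha)
  have hYprod : μ (⋂ b ∈ S.toRight, s (Sum.inr b))
      = ∏ b ∈ S.toRight, μ (s (Sum.inr b)) :=
    hYind.meas_biInter fun b hb => hs (Sum.inr b) (Finset.mem_toRight.1 hb)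
  rw [hSplit, hXYmul, hXprod, hYprod, hProd]

private lemma biSup_elim_image_union {Ω 𝒳 𝒴 : Type*} {ι κ : Type*}
    [m𝒳 : MeasurableSpace 𝒳] [m𝒴 : MeasurableSpace 𝒴]
    (X : ι → Ω → 𝒳) (Y : κ → Ω → 𝒴) (C : Finset ι) (D : Finset κ) :
    (⨆ i ∈ (Sum.inl '' (C : Set ι) ∪ Sum.inr '' (D : Set κ) : Set (ι ⊕ κ)),
        Sum.elim (fun i => MeasurableSpace.comap (X i) m𝒳)
          (fun p => MeasurableSpace.comap (Y p) m𝒴) i)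
      = (⨆ i ∈ C, MeasurableSpace.comap (X i) m𝒳)
        ⊔ ⨆ p ∈ D, MeasurableSpace.comap (Y p) m𝒴 := by
  rw [iSup_union, iSup_image, iSup_image]
  rfl

private lemma indep_comap_families {Ω 𝒳 𝒴 : Type*} {ι κ : Type*}
    [m𝒳 : MeasurableSpace 𝒳] [m𝒴 : MeasurableSpace 𝒴]
    [m0 : MeasurableSpace Ω] {μ : Measure Ω} [IsProbabilityMeasure μ]
    {X : ι → Ω → 𝒳} {Y : κ → Ω → 𝒴}
    (hXm : ∀ i, Measurable (X i)) (hYm : ∀ p, Measurable (Y p))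
    (hXind : iIndepFun X μ)
    (hYind : iIndepFun Y μ)
    (hXY : IndepFun (fun ω => fun i => X i ω) (fun ω => fun p => Y p ω) μ)
    (C E : Finset ι) (D F : Finset κ) (hCE : Disjoint C E) (hDF : Disjoint D F) :
    Indep ((⨆ i ∈ C, MeasurableSpace.comap (X i) m𝒳)
        ⊔ ⨆ p ∈ D, MeasurableSpace.comap (Y p) m𝒴)
      ((⨆ i ∈ E, MeasurableSpace.comap (X i) m𝒳)
        ⊔ ⨆ p ∈ F, MeasurableSpace.comap (Y p) m𝒴) μ := by
  have hii := iIndep_sum_family hXind hYind hXY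
  have h_le : ∀ i : ι ⊕ κ, Sum.elim (fun i => MeasurableSpace.comap (X i) m𝒳)
      (fun p => MeasurableSpace.comap (Y p) m𝒴) i ≤ m0 := by
    rintro (i | p)
    · exact (hXm i).comap_le
    · exact (hYm p).comap_le
  have hST : Disjoint
      (Sum.inl '' (C : Set ι) ∪ Sum.inr '' (D : Set κ) : Set (ι ⊕ κ))
      (Sum.inl '' (E : Set ι) ∪ Sum.inr '' (F : Set κ) : Set (ι ⊕ κ)) := by
    rw [Set.disjoint_left]
    rintro x (⟨a, ha, rfl⟩ | ⟨b, hb, rfl⟩) hx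
    · rcases hx with ⟨a', ha', h⟩ | ⟨b', hb', h⟩
      · cases h
        exact Finset.disjoint_left.1 hCE ha ha'
      · cases h
    · rcases hx with ⟨a', ha', h⟩ | ⟨b', hb', h⟩
      · cases h
      · cases h
        exact Finset.disjoint_left.1 hDF hb hb'
  have := indep_iSup_of_disjoint h_le hii hST
  rwa [biSup_elim_image_union, biSup_elim_image_union] at this

private lemma biSup_finset_union {α β : Type*} [CompleteLattice β] [DecidableEq α]
    {s t : Finset α} {f : α → β} :
    (⨆ i ∈ (s ∪ t : Finset α), f i) = (⨆ i ∈ s, f i) ⊔ ⨆ i ∈ t, f i := by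
  have h : ∀ u : Finset α, (⨆ i ∈ u, f i) = ⨆ i ∈ (u : Set α), f i := fun u => rfl
  rw [h (s ∪ t), h s, h t, Finset.coe_union, iSup_union]

private lemma eventuallyEq_sum_ag {α ι M : Type*} [AddCommMonoid M] {l : Filter α}
    (s : Finset ι) {f g : ι → α → M} (h : ∀ i ∈ s, f i =ᶠ[l] g i) :
    (∑ i ∈ s, f i) =ᶠ[l] ∑ i ∈ s, g i := by
  classical
  induction s using Finset.cons_induction with
  | empty => simp
  | cons i s hi ih =>
    rw [Finset.sum_cons, Finset.sum_cons]
    exact (h i (Finset.mem_cons_self _ _)).add (ih fun j hj => h j (Finset.mem_cons.2 (Or.inr hj)))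
/-- **Statement 7 (Proposition 5.1): Hoeffding decomposition orthogonality.**
For the components `f_{A,B}` defined by inclusion–exclusion from conditional expectations
of an integrable kernel `f` of i.i.d. variables `X₁,…,X_k` and `Y_{i,j}` (`i<j`), for any
`(A,B) ≠ (∅,∅)` and `At ⊆ A`, `Bt ⊆ B` with `(At,Bt) ≠ (A,B)`:
`E[ f_{A,B}(X_A;Y_B) | X_At, Y_Bt ] = 0` a.s. -/
theorem stmt7
    {Ω 𝒳 𝒴 : Type*} [MeasurableSpace Ω] [MeasurableSpace 𝒳] [MeasurableSpace 𝒴]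
    (k : ℕ) (μ : Measure Ω) [IsProbabilityMeasure μ]
    (ν : Measure 𝒳) [IsProbabilityMeasure ν]
    (ρ : Measure 𝒴) [IsProbabilityMeasure ρ]
    (X : Fin k → Ω → 𝒳)
    (Y : {p : Fin k × Fin k // p.1 < p.2} → Ω → 𝒴)
    (hXm : ∀ i, Measurable (X i)) (hYm : ∀ p, Measurable (Y p))
    -- i.i.d. within each family, and the two families are mutually independent:
    (hXind : ProbabilityTheory.iIndepFun X μ)
    (hYind : ProbabilityTheory.iIndepFun Y μ)
    (hXY : ProbabilityTheory.IndepFun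
      (fun ω => fun i => X i ω) (fun ω => fun p => Y p ω) μ)
    (hXid : ∀ i, Measure.map (X i) μ = ν)
    (hYid : ∀ p, Measure.map (Y p) μ = ρ)
    (f : (Fin k → 𝒳) → ({p : Fin k × Fin k // p.1 < p.2} → 𝒴) → ℝ)
    (hfm : Measurable (Function.uncurry f))
    (f₀ : Ω → ℝ) (hf₀ : f₀ = fun ω => f (fun i => X i ω) (fun p => Y p ω))
    (hfint : Integrable f₀ μ)
    -- the σ-algebra generated by `(X_{A'}, Y_{B'})`:
    (𝔪 : Finset (Fin k) → Finset {p : Fin k × Fin k // p.1 < p.2} → MeasurableSpace Ω)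
    (h𝔪 : ∀ A' B', 𝔪 A' B' =
      (⨆ i ∈ A', MeasurableSpace.comap (X i) inferInstance) ⊔
      (⨆ p ∈ B', MeasurableSpace.comap (Y p) inferInstance))
    -- the Hoeffding component `f_{A,B}(X_A; Y_B)` as a random variable:
    (fAB : Finset (Fin k) → Finset {p : Fin k × Fin k // p.1 < p.2} → Ω → ℝ)
    (hfAB : ∀ A B, fAB A B = fun ω =>
      ∑ A' ∈ A.powerset, ∑ B' ∈ B.powerset,
        (-1 : ℝ) ^ (A.card + B.card - A'.card - B'.card) * (μ[f₀ | 𝔪 A' B']) ω)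
    (A : Finset (Fin k)) (B : Finset {p : Fin k × Fin k // p.1 < p.2})
    (hAB : ¬(A = ∅ ∧ B = ∅))
    (At : Finset (Fin k)) (Bt : Finset {p : Fin k × Fin k // p.1 < p.2})
    (hAt : At ⊆ A) (hBt : Bt ⊆ B) (hne : ¬(At = A ∧ Bt = B)) :
    μ[fAB A B | 𝔪 At Bt] =ᵐ[μ] 0 := by
  classical
  have m_le : ∀ C D, 𝔪 C D ≤ ‹MeasurableSpace Ω› := by
    intro C D; rw [h𝔪]
    exact sup_le (iSup₂_le fun i _ => (hXm i).comap_le)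
      (iSup₂_le fun p _ => (hYm p).comap_le)
  have m_mono : ∀ {C C' D D'}, C ⊆ C' → D ⊆ D' → 𝔪 C D ≤ 𝔪 C' D' := by
    intro C C' D D' h1 h2; rw [h𝔪, h𝔪]
    exact sup_le_sup (biSup_mono h1) (biSup_mono h2)
  have m_sup : ∀ C C' D D', 𝔪 C D ⊔ 𝔪 C' D' = 𝔪 (C ∪ C') (D ∪ D') := by
    intro C C' D D'; rw [h𝔪, h𝔪, h𝔪, biSup_finset_union, biSup_finset_union]
    exact sup_sup_sup_comm _ _ _ _
  have hterm : ∀ (A' : Finset (Fin k)) (B' : Finset {p : Fin k × Fin k // p.1 < p.2}),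
      μ[ (μ[f₀ | 𝔪 A' B']) | 𝔪 At Bt ] =ᵐ[μ] μ[f₀ | 𝔪 (A' ∩ At) (B' ∩ Bt)] := by
    intro A' B'
    have e1 : (A' ∩ At) ∪ (At \ A') = At := by
      rw [Finset.inter_comm, Finset.union_comm]; exact Finset.sdiff_union_inter At A'
    have e2 : (B' ∩ Bt) ∪ (Bt \ B') = Bt := by
      rw [Finset.inter_comm, Finset.union_comm]; exact Finset.sdiff_union_inter Bt B'
    have hsup : 𝔪 (A' ∩ At) (B' ∩ Bt) ⊔ 𝔪 (At \ A') (Bt \ B') = 𝔪 At Bt := by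
      rw [m_sup, e1, e2]
    have hindep : Indep (𝔪 A' B') (𝔪 (At \ A') (Bt \ B')) μ := by
      rw [h𝔪, h𝔪]
      exact indep_comap_families hXm hYm hXind hYind hXY A' (At \ A') B' (Bt \ B')
        Finset.disjoint_sdiff Finset.disjoint_sdiff
    rw [← hsup]
    exact condexp_condexp_sup_of_indep μ (m_le A' B') (m_le (At \ A') (Bt \ B'))
      (m_mono Finset.inter_subset_left Finset.inter_subset_left) hindep hfint
  set c : Finset (Fin k) × Finset {p : Fin k × Fin k // p.1 < p.2} → ℝ :=
    fun p => (-1 : ℝ) ^ (A.card + B.card - p.1.card - p.2.card) with hc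
  set J := A.powerset ×ˢ B.powerset with hJ
  have hrep : fAB A B = ∑ p ∈ J, c p • (μ[f₀ | 𝔪 p.1 p.2]) := by
    rw [hfAB]; funext ω
    rw [Finset.sum_apply, Finset.sum_product]
    simp [hc, smul_eq_mul]
  have h1 : μ[fAB A B | 𝔪 At Bt]
      =ᵐ[μ] ∑ p ∈ J, c p • μ[ (μ[f₀ | 𝔪 p.1 p.2]) | 𝔪 At Bt] := by
    rw [hrep]
    refine (condExp_finsetSum (fun p _ => (integrable_condExp).smul (c p)) (𝔪 At Bt)).trans ?_
    exact eventuallyEq_sum_ag J fun p _ => condExp_smul (c p) _ _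
  have h2 : (∑ p ∈ J, c p • μ[ (μ[f₀ | 𝔪 p.1 p.2]) | 𝔪 At Bt])
      =ᵐ[μ] ∑ p ∈ J, c p • μ[f₀ | 𝔪 (p.1 ∩ At) (p.2 ∩ Bt)] := by
    refine eventuallyEq_sum_ag J fun p _ => ?_
    exact (hterm p.1 p.2).mono fun ω hω => by simp [hω]
  have h3 : (∑ p ∈ J, c p • μ[f₀ | 𝔪 (p.1 ∩ At) (p.2 ∩ Bt)]) = (0 : Ω → ℝ) := by
    funext ω
    have halg := alg_sum_zero hAt hBt hne (fun C D => (μ[f₀ | 𝔪 C D]) ω)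
    rw [Finset.sum_apply]
    simp only [Pi.smul_apply, smul_eq_mul, hc, hJ]
    rw [Finset.sum_product]
    simpa using halg
  exact h1.trans (h2.trans (by rw [h3]))
end

section
/- In the Hoeffding decomposition of the induced subgraph-count kernel for G(n,p), the single-edge component is g^{ind}_{{(1,2)}}(y) = (N(F)/(p(1-p))) · (ē(F) - p)(y - p), where N(F) = (v(F)!/|Aut(F)|) p^{e(F)} (1-p)^{binom(v(F),2) - e(F)} and ē(F) = e(F)/binom(v(F),2). In particular this component vanishes if and only if e(F) = p·binom(v(F),2). -/
open MeasureTheory ProbabilityTheory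
open scoped Classical

noncomputable def bernoulliReal (p : ℝ) : Measure ℝ :=
  ENNReal.ofReal p • Measure.dirac 1 + ENNReal.ofReal (1 - p) • Measure.dirac 0

instance bern_finite (p : ℝ) : IsFiniteMeasure (bernoulliReal p) := by
  constructor
  simp only [bernoulliReal, Measure.coe_add, Pi.add_apply, Measure.coe_smul, Pi.smul_apply,
    smul_eq_mul]
  exact ENNReal.add_lt_top.2 ⟨ENNReal.mul_lt_top ENNReal.ofReal_lt_top (by simp),
    ENNReal.mul_lt_top ENNReal.ofReal_lt_top (by simp)⟩

lemma bern_prob (p : ℝ) (hp : 0 ≤ p) (hp1 : p ≤ 1) :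
    IsProbabilityMeasure (bernoulliReal p) := by
  constructor
  simp only [bernoulliReal, Measure.coe_add, Pi.add_apply, Measure.coe_smul, Pi.smul_apply,
    smul_eq_mul, Measure.dirac_apply' _ MeasurableSet.univ, Set.indicator_univ, Pi.one_apply,
    mul_one]
  rw [← ENNReal.ofReal_add hp (by linarith)]
  norm_num

lemma integrable_dirac' (f : ℝ → ℝ) (a : ℝ) : Integrable f (Measure.dirac a) := by
  refine ⟨(aestronglyMeasurable_const (b := f a)).congr ?_, ?_⟩
  · exact (MeasureTheory.ae_eq_dirac f).symm
  · simp [HasFiniteIntegral, MeasureTheory.lintegral_dirac]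

lemma bern_integrable (p : ℝ) (f : ℝ → ℝ) : Integrable f (bernoulliReal p) := by
  unfold bernoulliReal
  refine Integrable.add_measure ?_ ?_
  · exact (integrable_dirac' f 1).smul_measure ENNReal.ofReal_ne_top
  · exact (integrable_dirac' f 0).smul_measure ENNReal.ofReal_ne_top

lemma bern_integral (p : ℝ) (hp : 0 ≤ p) (hp1 : p ≤ 1) (f : ℝ → ℝ) :
    ∫ x, f x ∂(bernoulliReal p) = p * f 1 + (1 - p) * f 0 := by
  unfold bernoulliReal
  rw [integral_add_measure ((integrable_dirac' f 1).smul_measure ENNReal.ofReal_ne_top)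
    ((integrable_dirac' f 0).smul_measure ENNReal.ofReal_ne_top),
    integral_smul_measure, integral_smul_measure, integral_dirac, integral_dirac]
  rw [ENNReal.toReal_ofReal hp, ENNReal.toReal_ofReal (by linarith)]
  simp [smul_eq_mul]

lemma pi_bern_integral {ι : Type*} [Fintype ι] (p : ℝ) (f : ι → ℝ → ℝ) :
    ∫ x : ι → ℝ, (∏ i, f i (x i)) ∂(Measure.pi fun _ : ι => bernoulliReal p)
      = ∏ i, ∫ x, f i x ∂(bernoulliReal p) := by
  have := MeasureTheory.integral_fintype_prod_eq_prod (𝕜 := ℝ) (E := fun _ => ℝ) f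
    (μ := fun _ => bernoulliReal p)
  exact this

lemma pi_bern_integrable {ι : Type*} [Fintype ι] (p : ℝ) (f : ι → ℝ → ℝ) :
    Integrable (fun x : ι → ℝ => ∏ i, f i (x i))
      (Measure.pi fun _ : ι => bernoulliReal p) := by
  have := MeasureTheory.Integrable.fintype_prod (f := f)
    (μ := fun _ => bernoulliReal p) (fun i => bern_integrable p (f i))
  exact this

lemma prod_if_mem {ι : Type*} [Fintype ι] [DecidableEq ι] (A B : Finset ι)
    (hd : Disjoint A B) (f g : ι → ℝ) :
    (∏ c, (if c ∈ A then f c else if c ∈ B then g c else 1))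
      = (∏ c ∈ A, f c) * ∏ c ∈ B, g c := by
  rw [← Finset.prod_subset (Finset.subset_univ (A ∪ B))
    (by intro c _ hc; simp only [Finset.mem_union, not_or] at hc; simp [hc.1, hc.2]),
    Finset.prod_union hd]
  congr 1
  · exact Finset.prod_congr rfl fun c hc => by simp [hc]
  · refine Finset.prod_congr rfl fun c hc => ?_
    have : c ∉ A := fun h => (Finset.disjoint_left.1 hd h) hc
    simp [this, hc]

lemma exists_perm_pair {V : Type*} [DecidableEq V] {a b a' b' : V} (hab : a ≠ b)
    (hab' : a' ≠ b') : ∃ g : Equiv.Perm V, g a = a' ∧ g b = b' := by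
  refine ⟨(Equiv.swap a a').trans (Equiv.swap ((Equiv.swap a a') b) b'), ?_, ?_⟩
  · rw [Equiv.trans_apply, Equiv.swap_apply_left]
    refine Equiv.swap_apply_of_ne_of_ne ?_ hab'
    intro h
    exact hab (((Equiv.swap a a').injective (by rw [← h, Equiv.swap_apply_left])).symm)
  · rw [Equiv.trans_apply, Equiv.swap_apply_left]

lemma perm_fiber_card {V : Type*} [Fintype V] [DecidableEq V] (i0 i1 : V)
    {a b a' b' : V} (hab : a ≠ b) (hab' : a' ≠ b') :
    (Finset.univ.filter fun τ : Equiv.Perm V => τ i0 = a ∧ τ i1 = b).card =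
    (Finset.univ.filter fun τ : Equiv.Perm V => τ i0 = a' ∧ τ i1 = b').card := by
  obtain ⟨g, hga, hgb⟩ := exists_perm_pair hab hab'
  refine Finset.card_bij' (fun τ _ => τ.trans g) (fun τ _ => τ.trans g.symm) ?_ ?_ ?_ ?_
  · intro τ hτ
    simp only [Finset.mem_filter, Finset.mem_univ, true_and] at hτ ⊢
    simp [Equiv.trans_apply, hτ.1, hτ.2, hga, hgb]
  · intro τ hτ
    simp only [Finset.mem_filter, Finset.mem_univ, true_and] at hτ ⊢
    constructor
    · rw [Equiv.trans_apply, hτ.1, ← hga, Equiv.symm_apply_apply]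
    · rw [Equiv.trans_apply, hτ.2, ← hgb, Equiv.symm_apply_apply]
  · intro τ _; ext x; simp
  · intro τ _; ext x; simp

lemma count_adj_perms {V : Type*} [Fintype V] [DecidableEq V] (i0 i1 : V) (h01 : i0 ≠ i1)
    (G : SimpleGraph V) [DecidableRel G.Adj] :
    (Finset.univ.filter fun τ : Equiv.Perm V => G.Adj (τ i0) (τ i1)).card
        * (Fintype.card V * (Fintype.card V - 1))
      = 2 * G.edgeFinset.card * (Fintype.card V).factorial := by
  classical
  set c := (Finset.univ.filter fun τ : Equiv.Perm V => τ i0 = i0 ∧ τ i1 = i1).card with hc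
  -- total count
  have key : ∀ q ∈ (Finset.univ : Finset V).offDiag,
      (Finset.univ.filter fun τ : Equiv.Perm V => (τ i0, τ i1) = q).card = c := by
    intro q hq
    have hq' : q.1 ≠ q.2 := (Finset.mem_offDiag.1 hq).2.2
    have h : (Finset.univ.filter fun τ : Equiv.Perm V => (τ i0, τ i1) = q)
        = Finset.univ.filter fun τ : Equiv.Perm V => τ i0 = q.1 ∧ τ i1 = q.2 := by
      ext τ; simp [Prod.ext_iff]
    rw [h]
    exact perm_fiber_card i0 i1 hq' h01
  have h1 : (Fintype.card V).factorial = (Fintype.card V * (Fintype.card V - 1)) * c := by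
    have ht := Finset.card_eq_sum_card_fiberwise
      (s := (Finset.univ : Finset (Equiv.Perm V))) (t := Finset.univ.offDiag)
      (f := fun τ => (τ i0, τ i1))
      (fun τ _ => by
        simp only [Finset.mem_coe, Finset.mem_offDiag, Finset.mem_univ, true_and]
        exact fun h => h01 (τ.injective h))
    rw [Finset.card_univ, Fintype.card_perm, Finset.sum_congr rfl key, Finset.sum_const,
      smul_eq_mul, Finset.offDiag_card, Finset.card_univ] at ht
    rw [ht, Nat.mul_sub_one]
  -- adjacency count
  have h2 : (Finset.univ.filter fun τ : Equiv.Perm V => G.Adj (τ i0) (τ i1)).card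
      = (2 * G.edgeFinset.card) * c := by
    have hmem : ∀ τ ∈ (Finset.univ.filter fun τ : Equiv.Perm V => G.Adj (τ i0) (τ i1)),
        (τ i0, τ i1) ∈ Finset.univ.filter fun q : V × V => G.Adj q.1 q.2 := by
      intro τ hτ
      simp only [Finset.mem_filter, Finset.mem_univ, true_and] at hτ ⊢
      exact hτ
    have := Finset.card_eq_sum_card_fiberwise hmem
    rw [this, Finset.sum_congr rfl (fun q hq => ?_), Finset.sum_const, smul_eq_mul]
    · congr 1
      rw [← SimpleGraph.two_mul_card_edgeFinset]
    · simp only [Finset.mem_filter, Finset.mem_univ, true_and] at hq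
      have : ((Finset.univ.filter fun τ : Equiv.Perm V => G.Adj (τ i0) (τ i1)).filter
            fun τ => (τ i0, τ i1) = q)
          = Finset.univ.filter fun τ : Equiv.Perm V => τ i0 = q.1 ∧ τ i1 = q.2 := by
        ext τ
        simp only [Finset.mem_filter, Finset.mem_univ, true_and, Prod.ext_iff]
        constructor
        · rintro ⟨-, h⟩; exact h
        · rintro ⟨h1, h2⟩; exact ⟨by rw [h1, h2]; exact hq, h1, h2⟩
      rw [this]
      exact perm_fiber_card i0 i1 hq.ne h01
  rw [h2, h1]; ring

noncomputable def eA {k : ℕ} (F : SimpleGraph (Fin k)) [DecidableRel F.Adj]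
    (σ : Equiv.Perm (Fin k)) : Finset (Sym2 (Fin k)) :=
  F.edgeFinset.image (Sym2.map ⇑σ)

lemma mem_eA {k : ℕ} (F : SimpleGraph (Fin k)) [DecidableRel F.Adj]
    (σ : Equiv.Perm (Fin k)) (e : Sym2 (Fin k)) :
    e ∈ eA F σ ↔ Sym2.map ⇑σ.symm e ∈ F.edgeFinset := by
  unfold eA
  simp only [Finset.mem_image]
  constructor
  · rintro ⟨a, ha, rfl⟩
    rwa [Sym2.map_map, show (⇑σ.symm ∘ ⇑σ) = id from funext fun x => σ.symm_apply_apply x,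
      Sym2.map_id, id_eq]
  · intro h
    exact ⟨_, h, by
      rw [Sym2.map_map, show (⇑σ ∘ ⇑σ.symm) = id from funext fun x => σ.apply_symm_apply x,
        Sym2.map_id, id_eq]⟩

lemma eA_card {k : ℕ} (F : SimpleGraph (Fin k)) [DecidableRel F.Adj]
    (σ : Equiv.Perm (Fin k)) : (eA F σ).card = F.edgeFinset.card :=
  Finset.card_image_of_injective _ (Sym2.map.injective σ.injective)

lemma edge_disj {k : ℕ} (F : SimpleGraph (Fin k)) [DecidableRel F.Adj] :
    Disjoint F.edgeFinset Fᶜ.edgeFinset := by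
  refine Finset.disjoint_left.2 fun e he he' => ?_
  induction e with
  | _ a b =>
    rw [SimpleGraph.mem_edgeFinset, SimpleGraph.mem_edgeSet] at he he'
    exact he'.2 he

lemma eA_disj {k : ℕ} (F : SimpleGraph (Fin k)) [DecidableRel F.Adj]
    (σ : Equiv.Perm (Fin k)) : Disjoint (eA F σ) (eA Fᶜ σ) := by
  refine Finset.disjoint_left.2 fun e he he' => ?_
  rw [mem_eA] at he he'
  exact Finset.disjoint_left.1 (edge_disj F) he he'

lemma edge_card_sum {k : ℕ} (F : SimpleGraph (Fin k)) [DecidableRel F.Adj] :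
    F.edgeFinset.card + Fᶜ.edgeFinset.card = Nat.choose k 2 := by
  classical
  rw [← Finset.card_union_of_disjoint (edge_disj F)]
  have : F.edgeFinset ∪ Fᶜ.edgeFinset = (⊤ : SimpleGraph (Fin k)).edgeFinset := by
    ext e
    induction e with
    | _ a b =>
      simp only [Finset.mem_union, SimpleGraph.mem_edgeFinset, SimpleGraph.mem_edgeSet,
        SimpleGraph.compl_adj, SimpleGraph.top_adj]
      constructor
      · rintro (h | h)
        · exact h.ne
        · exact h.1
      · intro h
        by_cases hF : F.Adj a b
        · exact Or.inl hF
        · exact Or.inr ⟨h, hF⟩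
  rw [this, SimpleGraph.card_edgeFinset_top_eq_card_choose_two, Fintype.card_fin]

noncomputable def coordFun {k : ℕ} (F : SimpleGraph (Fin k)) [DecidableRel F.Adj]
    (σ : Equiv.Perm (Fin k)) (c : Sym2 (Fin k)) : ℝ → ℝ :=
  fun x => if c ∈ eA F σ then x else if c ∈ eA Fᶜ σ then 1 - x else 1

lemma coordFun_repr {k : ℕ} (F : SimpleGraph (Fin k)) [DecidableRel F.Adj]
    (σ : Equiv.Perm (Fin k)) (ξ : Sym2 (Fin k) → ℝ) :
    (∏ e ∈ F.edgeFinset, ξ (Sym2.map ⇑σ e)) * ∏ e ∈ Fᶜ.edgeFinset, (1 - ξ (Sym2.map ⇑σ e))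
      = ∏ c : Sym2 (Fin k), coordFun F σ c (ξ c) := by
  unfold coordFun
  rw [prod_if_mem (eA F σ) (eA Fᶜ σ) (eA_disj F σ) (fun c => ξ c) (fun c => 1 - ξ c)]
  unfold eA
  rw [Finset.prod_image (fun x _ y _ h => Sym2.map.injective σ.injective h),
    Finset.prod_image (fun x _ y _ h => Sym2.map.injective σ.injective h)]

lemma coordFun_integral {k : ℕ} (p : ℝ) (hp : 0 ≤ p) (hp1 : p ≤ 1)
    (F : SimpleGraph (Fin k)) [DecidableRel F.Adj]
    (σ : Equiv.Perm (Fin k)) (c : Sym2 (Fin k)) :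
    ∫ x, coordFun F σ c x ∂(bernoulliReal p)
      = if c ∈ eA F σ then p else if c ∈ eA Fᶜ σ then 1 - p else 1 := by
  unfold coordFun
  by_cases h1 : c ∈ eA F σ
  · simp only [h1, if_true]
    rw [bern_integral p hp hp1 (fun x => x)]; ring
  · by_cases h2 : c ∈ eA Fᶜ σ
    · simp only [h1, h2, if_true, if_false]
      rw [bern_integral p hp hp1 (fun x => 1 - x)]; ring
    · simp only [h1, h2, if_false]
      rw [bern_integral p hp hp1 (fun _ => 1)]; ring

lemma plain_integral {k : ℕ} (p : ℝ) (hp : 0 ≤ p) (hp1 : p ≤ 1)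
    (F : SimpleGraph (Fin k)) [DecidableRel F.Adj] (σ : Equiv.Perm (Fin k))
    (e0 : Sym2 (Fin k)) :
    ∫ ξ, ((∏ e ∈ F.edgeFinset, ξ (Sym2.map ⇑σ e))
        * ∏ e ∈ Fᶜ.edgeFinset, (1 - ξ (Sym2.map ⇑σ e)))
      ∂(Measure.pi fun _ : Sym2 (Fin k) => bernoulliReal p)
    = (if e0 ∈ eA F σ then p else if e0 ∈ eA Fᶜ σ then 1 - p else 1)
      * ∏ c ∈ Finset.univ.erase e0,
          (if c ∈ eA F σ then p else if c ∈ eA Fᶜ σ then 1 - p else 1) := by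
  rw [show (fun ξ : Sym2 (Fin k) → ℝ => (∏ e ∈ F.edgeFinset, ξ (Sym2.map ⇑σ e))
        * ∏ e ∈ Fᶜ.edgeFinset, (1 - ξ (Sym2.map ⇑σ e)))
      = fun ξ => ∏ c : Sym2 (Fin k), coordFun F σ c (ξ c) from funext (coordFun_repr F σ)]
  rw [pi_bern_integral p (coordFun F σ)]
  rw [Finset.prod_congr rfl (fun c _ => coordFun_integral p hp hp1 F σ c),
    ← Finset.mul_prod_erase _ _ (Finset.mem_univ e0)]

lemma updated_integral {k : ℕ} (p : ℝ) (hp : 0 ≤ p) (hp1 : p ≤ 1)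
    (F : SimpleGraph (Fin k)) [DecidableRel F.Adj] (σ : Equiv.Perm (Fin k))
    (e0 : Sym2 (Fin k)) (y : ℝ) :
    ∫ ξ, ((∏ e ∈ F.edgeFinset, (Function.update ξ e0 y) (Sym2.map ⇑σ e))
        * ∏ e ∈ Fᶜ.edgeFinset, (1 - (Function.update ξ e0 y) (Sym2.map ⇑σ e)))
      ∂(Measure.pi fun _ : Sym2 (Fin k) => bernoulliReal p)
    = coordFun F σ e0 y
      * ∏ c ∈ Finset.univ.erase e0,
          (if c ∈ eA F σ then p else if c ∈ eA Fᶜ σ then 1 - p else 1) := by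
  haveI := bern_prob p hp hp1
  set f2 : Sym2 (Fin k) → ℝ → ℝ :=
    fun c => if c = e0 then (fun _ => coordFun F σ e0 y) else coordFun F σ c with hf2
  have hfe : (fun ξ : Sym2 (Fin k) → ℝ => (∏ e ∈ F.edgeFinset,
        (Function.update ξ e0 y) (Sym2.map ⇑σ e))
        * ∏ e ∈ Fᶜ.edgeFinset, (1 - (Function.update ξ e0 y) (Sym2.map ⇑σ e)))
      = fun ξ => ∏ c : Sym2 (Fin k), f2 c (ξ c) := by
    funext ξ
    rw [coordFun_repr F σ (Function.update ξ e0 y)]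
    refine Finset.prod_congr rfl fun c _ => ?_
    rw [hf2, Function.update_apply]
    by_cases h : c = e0
    · subst h; simp
    · simp [h]
  rw [hfe, pi_bern_integral p f2, ← Finset.mul_prod_erase _ _ (Finset.mem_univ e0)]
  congr 1
  · rw [hf2]; simp [integral_const]
  · refine Finset.prod_congr rfl fun c hc => ?_
    have hne : c ≠ e0 := Finset.ne_of_mem_erase hc
    rw [hf2]
    simp only [hne, if_false]
    exact coordFun_integral p hp hp1 F σ c

lemma prod_vals {k : ℕ} (p : ℝ) (F : SimpleGraph (Fin k)) [DecidableRel F.Adj]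
    (σ : Equiv.Perm (Fin k)) :
    (∏ c : Sym2 (Fin k), (if c ∈ eA F σ then p else if c ∈ eA Fᶜ σ then 1 - p else 1))
      = p ^ F.edgeFinset.card * (1 - p) ^ Fᶜ.edgeFinset.card := by
  rw [prod_if_mem (eA F σ) (eA Fᶜ σ) (eA_disj F σ) (fun _ => p) (fun _ => 1 - p),
    Finset.prod_const, Finset.prod_const, eA_card, eA_card]

lemma plain_integrable {k : ℕ} (p : ℝ) (F : SimpleGraph (Fin k)) [DecidableRel F.Adj]
    (σ : Equiv.Perm (Fin k)) :
    Integrable (fun ξ : Sym2 (Fin k) → ℝ => (∏ e ∈ F.edgeFinset, ξ (Sym2.map ⇑σ e))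
        * ∏ e ∈ Fᶜ.edgeFinset, (1 - ξ (Sym2.map ⇑σ e)))
      (Measure.pi fun _ : Sym2 (Fin k) => bernoulliReal p) := by
  rw [show (fun ξ : Sym2 (Fin k) → ℝ => (∏ e ∈ F.edgeFinset, ξ (Sym2.map ⇑σ e))
        * ∏ e ∈ Fᶜ.edgeFinset, (1 - ξ (Sym2.map ⇑σ e)))
      = fun ξ => ∏ c : Sym2 (Fin k), coordFun F σ c (ξ c) from funext (coordFun_repr F σ)]
  exact pi_bern_integrable p (coordFun F σ)

lemma updated_integrable {k : ℕ} (p : ℝ) (F : SimpleGraph (Fin k)) [DecidableRel F.Adj]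
    (σ : Equiv.Perm (Fin k)) (e0 : Sym2 (Fin k)) (y : ℝ) :
    Integrable (fun ξ : Sym2 (Fin k) → ℝ =>
        (∏ e ∈ F.edgeFinset, (Function.update ξ e0 y) (Sym2.map ⇑σ e))
        * ∏ e ∈ Fᶜ.edgeFinset, (1 - (Function.update ξ e0 y) (Sym2.map ⇑σ e)))
      (Measure.pi fun _ : Sym2 (Fin k) => bernoulliReal p) := by
  have hfe : (fun ξ : Sym2 (Fin k) → ℝ => (∏ e ∈ F.edgeFinset,
        (Function.update ξ e0 y) (Sym2.map ⇑σ e))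
        * ∏ e ∈ Fᶜ.edgeFinset, (1 - (Function.update ξ e0 y) (Sym2.map ⇑σ e)))
      = fun ξ => ∏ c : Sym2 (Fin k),
          (if c = e0 then (fun _ : ℝ => coordFun F σ e0 y) else coordFun F σ c) (ξ c) := by
    funext ξ
    rw [coordFun_repr F σ (Function.update ξ e0 y)]
    refine Finset.prod_congr rfl fun c _ => ?_
    rw [Function.update_apply]
    by_cases h : c = e0
    · subst h; simp
    · simp [h]
  rw [hfe]
  exact pi_bern_integrable p _

/-- The single-edge Hoeffding component of the induced subgraph-count
kernel for `G(n,p)` is `g^{ind}_{{(1,2)}}(y) = (N(F)/(p(1-p))) (ē(F) - p)(y - p)`, where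
`N(F) = (v(F)!/|Aut F|) p^{e(F)} (1-p)^{binom(v(F),2)-e(F)}` and
`ē(F) = e(F)/binom(v(F),2)`; it vanishes identically iff `e(F) = p·binom(v(F),2)`. -/
theorem stmt18
    (p : ℝ) (hp : 0 < p) (hp1 : p < 1)
    (k : ℕ) (hk : 2 ≤ k)
    (F : SimpleGraph (Fin k)) [DecidableRel F.Adj]
    (autF : ℕ)
    (haut : autF = Fintype.card {τ : Equiv.Perm (Fin k) //
      ∀ a b, F.Adj (τ a) (τ b) ↔ F.Adj a b})
    -- `N(F)` and `ē(F)`: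
    (N ebar : ℝ)
    (hN : N = (Nat.factorial k : ℝ) / autF * p ^ F.edgeFinset.card
      * (1 - p) ^ (Nat.choose k 2 - F.edgeFinset.card))
    (hebar : ebar = (F.edgeFinset.card : ℝ) / (Nat.choose k 2))
    -- the induced subgraph-count kernel:
    (g : (Sym2 (Fin k) → ℝ) → ℝ)
    (hg : g = fun ξ => (autF : ℝ)⁻¹ * ∑ σ : Equiv.Perm (Fin k),
      (∏ e ∈ F.edgeFinset, ξ (Sym2.map σ e))
        * ∏ e ∈ Fᶜ.edgeFinset, (1 - ξ (Sym2.map σ e)))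
    (π : Measure (Sym2 (Fin k) → ℝ))
    (hπ : π = Measure.pi fun _ : Sym2 (Fin k) => bernoulliReal p) :
    (∀ y : ℝ,
      (∫ ξ, g (Function.update ξ (Sym2.mk (⟨0, by omega⟩ : Fin k) (⟨1, by omega⟩ : Fin k)) y) ∂π)
          - (∫ ξ, g ξ ∂π)
        = N / (p * (1 - p)) * (ebar - p) * (y - p)) ∧
    ((∀ y : ℝ,
      (∫ ξ, g (Function.update ξ (Sym2.mk (⟨0, by omega⟩ : Fin k) (⟨1, by omega⟩ : Fin k)) y) ∂π)
          - (∫ ξ, g ξ ∂π) = 0)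
      ↔ (F.edgeFinset.card : ℝ) = p * (Nat.choose k 2)) := by
  set i0 : Fin k := ⟨0, by omega⟩ with hi0
  set i1 : Fin k := ⟨1, by omega⟩ with hi1
  have h01 : i0 ≠ i1 := by simp [hi0, hi1, Fin.ext_iff]
  set e0 : Sym2 (Fin k) := Sym2.mk i0 i1 with he0
  -- basic nonvanishing facts
  have hp0 : p ≠ 0 := ne_of_gt hp
  have h1p : 1 - p ≠ 0 := by linarith
  have hCpos : 0 < Nat.choose k 2 := Nat.choose_pos hk
  have hCR : ((Nat.choose k 2 : ℕ) : ℝ) ≠ 0 := by positivity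
  have hautpos : 0 < autF := by
    rw [haut]
    have : Nonempty {τ : Equiv.Perm (Fin k) // ∀ a b, F.Adj (τ a) (τ b) ↔ F.Adj a b} :=
      ⟨⟨1, fun a b => by simp⟩⟩
    exact Fintype.card_pos
  have hautR : (autF : ℝ) ≠ 0 := by positivity
  have hkfR : ((Nat.factorial k : ℕ) : ℝ) ≠ 0 := by positivity
  -- the counting facts
  set nA : ℕ := (Finset.univ.filter
    fun σ : Equiv.Perm (Fin k) => F.Adj (σ.symm i0) (σ.symm i1)).card with hnA
  set nB : ℕ := (Finset.univ.filter
    fun σ : Equiv.Perm (Fin k) => ¬ F.Adj (σ.symm i0) (σ.symm i1)).card with hnB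
  have hsumAB : nA + nB = Nat.factorial k := by
    rw [hnA, hnB, Finset.card_filter_add_card_filter_not, Finset.card_univ,
      Fintype.card_perm, Fintype.card_fin]
  have hswap : nA = (Finset.univ.filter
      fun τ : Equiv.Perm (Fin k) => F.Adj (τ i0) (τ i1)).card := by
    rw [hnA]
    refine Finset.card_bij' (fun σ _ => σ.symm) (fun τ _ => τ.symm) ?_ ?_ ?_ ?_
    · intro σ hσ; simpa using (Finset.mem_filter.1 hσ).2
    · intro τ hτ; simpa using (Finset.mem_filter.1 hτ).2
    · intro σ _; simp
    · intro τ _; simp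
  have h2C : 2 * Nat.choose k 2 = k * (k - 1) := by
    have hdvd : 2 ∣ k * (k - 1) := by
      have := Nat.even_mul_succ_self (k - 1)
      rw [Nat.sub_add_cancel (by omega)] at this
      rw [mul_comm]
      exact this.two_dvd
    rw [Nat.choose_two_right, Nat.mul_div_cancel' hdvd]
  have hnAC : (nA : ℝ) * (Nat.choose k 2) = (F.edgeFinset.card : ℝ) * Nat.factorial k := by
    have hn := count_adj_perms i0 i1 h01 F
    rw [Fintype.card_fin, ← hswap, ← h2C] at hn
    have hn2 : nA * Nat.choose k 2 = F.edgeFinset.card * Nat.factorial k := by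
      have h' : 2 * (nA * Nat.choose k 2) = 2 * (F.edgeFinset.card * Nat.factorial k) := by
        calc 2 * (nA * Nat.choose k 2) = nA * (2 * Nat.choose k 2) := by ring
          _ = 2 * F.edgeFinset.card * Nat.factorial k := hn
          _ = 2 * (F.edgeFinset.card * Nat.factorial k) := by ring
      omega
    exact_mod_cast hn2
  -- edge counts
  have hsumE : F.edgeFinset.card + Fᶜ.edgeFinset.card = Nat.choose k 2 := edge_card_sum F
  set P : ℝ := p ^ F.edgeFinset.card * (1 - p) ^ Fᶜ.edgeFinset.card with hP
  have hNP : N = (Nat.factorial k : ℝ) / autF * P := by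
    rw [hN, hP, show Nat.choose k 2 - F.edgeFinset.card = Fᶜ.edgeFinset.card by omega]
    ring
  -- membership dichotomy
  have hmemA : ∀ σ : Equiv.Perm (Fin k), e0 ∈ eA F σ ↔ F.Adj (σ.symm i0) (σ.symm i1) := by
    intro σ
    rw [mem_eA, he0, Sym2.map_pair_eq, SimpleGraph.mem_edgeFinset, SimpleGraph.mem_edgeSet]
  have hmemB : ∀ σ : Equiv.Perm (Fin k), ¬ F.Adj (σ.symm i0) (σ.symm i1) →
      e0 ∈ eA Fᶜ σ := by
    intro σ h
    rw [mem_eA, he0, Sym2.map_pair_eq, SimpleGraph.mem_edgeFinset, SimpleGraph.mem_edgeSet,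
      SimpleGraph.compl_adj]
    exact ⟨fun hh => h01 (σ.symm.injective hh), h⟩
  -- the main computation
  have Hy : ∀ y : ℝ,
      (∫ ξ, g (Function.update ξ e0 y) ∂π) - (∫ ξ, g ξ ∂π)
        = N / (p * (1 - p)) * (ebar - p) * (y - p) := by
    intro y
    simp only [hg, hπ]
    rw [integral_const_mul, integral_const_mul, ← mul_sub,
      integral_finset_sum _ (fun σ _ => updated_integrable p F σ e0 y),
      integral_finset_sum _ (fun σ _ => plain_integrable p F σ),
      ← Finset.sum_sub_distrib]
    have hterm : ∀ σ : Equiv.Perm (Fin k),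
        (∫ ξ, ((∏ e ∈ F.edgeFinset, (Function.update ξ e0 y) (Sym2.map ⇑σ e))
            * ∏ e ∈ Fᶜ.edgeFinset, (1 - (Function.update ξ e0 y) (Sym2.map ⇑σ e)))
          ∂(Measure.pi fun _ : Sym2 (Fin k) => bernoulliReal p))
        - (∫ ξ, ((∏ e ∈ F.edgeFinset, ξ (Sym2.map ⇑σ e))
            * ∏ e ∈ Fᶜ.edgeFinset, (1 - ξ (Sym2.map ⇑σ e)))
          ∂(Measure.pi fun _ : Sym2 (Fin k) => bernoulliReal p))
        = if F.Adj (σ.symm i0) (σ.symm i1) then (y - p) * (P / p)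
          else (p - y) * (P / (1 - p)) := by
      intro σ
      rw [updated_integral p hp.le hp1.le F σ e0 y, plain_integral p hp.le hp1.le F σ e0,
        ← sub_mul]
      have hPsplit : (if e0 ∈ eA F σ then p else if e0 ∈ eA Fᶜ σ then 1 - p else 1)
          * ∏ c ∈ Finset.univ.erase e0,
            (if c ∈ eA F σ then p else if c ∈ eA Fᶜ σ then 1 - p else 1) = P := by
        have hpv := prod_vals p F σ
        rwa [← Finset.mul_prod_erase _ _ (Finset.mem_univ e0)] at hpv
      by_cases hadj : F.Adj (σ.symm i0) (σ.symm i1)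
      · have hA : e0 ∈ eA F σ := (hmemA σ).2 hadj
        rw [if_pos hadj]
        simp only [coordFun, hA, if_true] at hPsplit ⊢
        rw [show (∏ c ∈ Finset.univ.erase e0,
            (if c ∈ eA F σ then p else if c ∈ eA Fᶜ σ then 1 - p else 1)) = P / p from by
          field_simp at hPsplit ⊢; linarith [hPsplit]]
      · have hA : e0 ∉ eA F σ := fun h => hadj ((hmemA σ).1 h)
        have hB : e0 ∈ eA Fᶜ σ := hmemB σ hadj
        rw [if_neg hadj]
        simp only [coordFun, hA, hB, if_true, if_false] at hPsplit ⊢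
        rw [show (∏ c ∈ Finset.univ.erase e0,
            (if c ∈ eA F σ then p else if c ∈ eA Fᶜ σ then 1 - p else 1)) = P / (1 - p) from by
          field_simp at hPsplit ⊢; linarith [hPsplit]]
        ring_nf
    rw [Finset.sum_congr rfl (fun σ _ => hterm σ), Finset.sum_ite, Finset.sum_const,
      Finset.sum_const, ← hnA, ← hnB, nsmul_eq_mul, nsmul_eq_mul]
    -- final algebra
    have haR : (nA : ℝ) = (F.edgeFinset.card : ℝ) * Nat.factorial k / Nat.choose k 2 := by
      rw [eq_div_iff hCR]
      exact hnAC
    have hbR : (nB : ℝ) = (Nat.factorial k : ℝ)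
        - (F.edgeFinset.card : ℝ) * Nat.factorial k / Nat.choose k 2 := by
      have h' : ((nA + nB : ℕ) : ℝ) = (Nat.factorial k : ℝ) := by rw [hsumAB]
      push_cast at h'
      rw [← haR]; linarith
    rw [haR, hbR, hNP, hebar]
    field_simp
    ring
  refine ⟨Hy, ?_⟩
  constructor
  · intro h
    have h1 := h (p + 1)
    rw [Hy (p + 1)] at h1
    simp only [add_sub_cancel_left, mul_one] at h1
    have hNne : N ≠ 0 := by
      rw [hNP, hP]
      positivity
    have : ebar - p = 0 := by
      rcases mul_eq_zero.1 h1 with h2 | h2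
      · exact absurd h2 (div_ne_zero hNne (by positivity))
      · exact h2
    rw [hebar, sub_eq_zero, div_eq_iff hCR] at this
    exact this
  · intro h y
    rw [Hy y, hebar, h, mul_div_assoc, div_self hCR, mul_one, sub_self, mul_zero, zero_mul]
end
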